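/- arXiv:2312.00708 — 6 statements merged into one kernel-verified Lean document; each statement's English description precedes it below -/
import Mathlib

section
/- Let N > 0 be a real number and let p_{rs} = c_{rs}/N. Let e be a finite set with |e| ≥ 2, let i, j ∈ e be distinct, and fix t_i = a and t_j = b with a, b ∈ {1,…,K}. Then Σ over all families (t_k)_{k∈e∖{i,j}} ∈ {1,…,K}^{e∖{i,j}} of (Σ_{{r,s}⊆e, r≠s} p_{t_r t_s}) · ∏_{m∈e∖{i,j}} n_{t_m} = (1/N)·[ c_{ab} + c·(|e|−2)·( 2 + (|e|−3)/2 ) ]. -/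
open Finset

set_option maxHeartbeats 1000000

open Finset

lemma prod_split_one {α : Type*} [Fintype α] [DecidableEq α] (u : α) (g : α → ℝ) :
    ∏ m, g m = g u * ∏ m ∈ Finset.univ.erase u, g m :=
  (Finset.mul_prod_erase Finset.univ g (Finset.mem_univ u)).symm

lemma prod_split_two {α : Type*} [Fintype α] [DecidableEq α] {u v : α} (huv : u ≠ v)
    (g : α → ℝ) :
    ∏ m, g m = g u * (g v * ∏ m ∈ (Finset.univ.erase u).erase v, g m) := by
  rw [Finset.mul_prod_erase (Finset.univ.erase u) g
      (Finset.mem_erase.2 ⟨huv.symm, Finset.mem_univ v⟩),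
    Finset.mul_prod_erase Finset.univ g (Finset.mem_univ u)]

lemma pi_sum_prod {α : Type*} [Fintype α] [DecidableEq α] {K : ℕ} (f : α → Fin K → ℝ) :
    ∑ t : α → Fin K, ∏ m, f m (t m) = ∏ m, ∑ x, f m x :=
  (Fintype.prod_sum f).symm

lemma sum_prod_n {α : Type*} [Fintype α] [DecidableEq α] {K : ℕ} (n : Fin K → ℝ)
    (hn1 : ∑ x, n x = 1) :
    ∑ t : α → Fin K, ∏ m, n (t m) = 1 := by
  rw [pi_sum_prod (fun _ => n)]
  simp [hn1]

lemma sum_one_marked {α : Type*} [Fintype α] [DecidableEq α] {K : ℕ} (n : Fin K → ℝ)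
    (hn1 : ∑ x, n x = 1) (k : α) (F : Fin K → ℝ) :
    ∑ t : α → Fin K, F (t k) * ∏ m, n (t m) = ∑ x, F x * n x := by
  have h1 : ∀ t : α → Fin K, F (t k) * ∏ m, n (t m)
      = ∏ m, (fun m y => if m = k then F y * n y else n y) m (t m) := by
    intro t
    have e1 : ∏ m ∈ Finset.univ.erase k,
        (if m = k then F (t m) * n (t m) else n (t m))
        = ∏ m ∈ Finset.univ.erase k, n (t m) :=
      Finset.prod_congr rfl (fun m hm => if_neg (Finset.ne_of_mem_erase hm))
    show F (t k) * ∏ m, n (t m) = ∏ m, (if m = k then F (t m) * n (t m) else n (t m))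
    rw [prod_split_one k (fun m => if m = k then F (t m) * n (t m) else n (t m)),
      prod_split_one k (fun m => n (t m)), e1]
    simp only [eq_self_iff_true, if_true]
    ring
  calc ∑ t : α → Fin K, F (t k) * ∏ m, n (t m)
      = ∑ t : α → Fin K, ∏ m, (fun m y => if m = k then F y * n y else n y) m (t m) :=
        Finset.sum_congr rfl fun t _ => h1 t
    _ = ∏ m, ∑ x, (fun m y => if m = k then F y * n y else n y) m x :=
        pi_sum_prod (fun m y => if m = k then F y * n y else n y)
    _ = ∑ x, F x * n x := by
        have h2 : ∀ m : α, (∑ x, (fun m y => if m = k then F y * n y else n y) m x)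
            = if m = k then ∑ x, F x * n x else 1 := by
          intro m; by_cases h : m = k <;> simp [h, hn1]
        rw [Finset.prod_congr rfl (fun m _ => h2 m), Finset.prod_ite_eq' Finset.univ k]
        simp

lemma sum_two_marked {α : Type*} [Fintype α] [DecidableEq α] {K : ℕ} (n : Fin K → ℝ)
    (hn1 : ∑ x, n x = 1) {u v : α} (huv : u ≠ v) (G : Fin K → Fin K → ℝ) :
    ∑ t : α → Fin K, G (t u) (t v) * ∏ m, n (t m) = ∑ x, n x * ∑ y, G x y * n y := by
  have h0 : ∀ t : α → Fin K, G (t u) (t v) * ∏ m, n (t m)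
      = ∑ x, (if t u = x then G x (t v) else 0) * ∏ m, n (t m) := by
    intro t
    rw [← Finset.sum_mul]
    congr 1
    simp
  have h1 : ∀ x : Fin K, ∀ t : α → Fin K,
      (if t u = x then G x (t v) else 0) * ∏ m, n (t m)
      = ∏ m, (fun m y => if m = u then (if y = x then n y else 0)
          else if m = v then G x y * n y else n y) m (t m) := by
    intro x t
    show (if t u = x then G x (t v) else 0) * ∏ m, n (t m)
      = ∏ m, (if m = u then (if t m = x then n (t m) else 0)
          else if m = v then G x (t m) * n (t m) else n (t m))
    by_cases h : t u = x
    · have e1 : ∏ m ∈ (Finset.univ.erase u).erase v,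
          (if m = u then (if t m = x then n (t m) else 0)
            else if m = v then G x (t m) * n (t m) else n (t m))
          = ∏ m ∈ (Finset.univ.erase u).erase v, n (t m) :=
        Finset.prod_congr rfl (fun m hm => by
          rw [if_neg (Finset.ne_of_mem_erase (Finset.mem_of_mem_erase hm)),
            if_neg (Finset.ne_of_mem_erase hm)])
      rw [prod_split_two huv (fun m => if m = u then (if t m = x then n (t m) else 0)
            else if m = v then G x (t m) * n (t m) else n (t m)),
        prod_split_two huv (fun m => n (t m)), e1]
      simp only [eq_self_iff_true, if_true, h, if_neg huv.symm, if_neg huv]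
      ring
    · rw [if_neg h, zero_mul]
      refine (Finset.prod_eq_zero (Finset.mem_univ u) ?_).symm
      rw [if_pos rfl, if_neg h]
  have h2 : ∀ x : Fin K,
      (∑ t : α → Fin K, (if t u = x then G x (t v) else 0) * ∏ m, n (t m))
      = n x * ∑ y, G x y * n y := by
    intro x
    calc ∑ t : α → Fin K, (if t u = x then G x (t v) else 0) * ∏ m, n (t m)
        = ∑ t : α → Fin K, ∏ m, (fun m y => if m = u then (if y = x then n y else 0)
            else if m = v then G x y * n y else n y) m (t m) :=
          Finset.sum_congr rfl fun t _ => h1 x t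
      _ = ∏ m, ∑ y, (fun m y => if m = u then (if y = x then n y else 0)
            else if m = v then G x y * n y else n y) m y :=
          pi_sum_prod (fun m y => if m = u then (if y = x then n y else 0)
            else if m = v then G x y * n y else n y)
      _ = n x * ∑ y, G x y * n y := by
          have h3 : ∀ m : α, (∑ y, (fun m y => if m = u then (if y = x then n y else 0)
              else if m = v then G x y * n y else n y) m y)
              = if m = u then n x else if m = v then ∑ y, G x y * n y else 1 := by
            intro m
            by_cases hu : m = u
            · simp [hu]
            · by_cases hv : m = v <;> simp [hu, hv, hn1]
          have e2 : ∏ m ∈ (Finset.univ.erase u).erase v,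
              (if m = u then n x else if m = v then ∑ y, G x y * n y else 1)
              = ∏ m ∈ (Finset.univ.erase u).erase v, (1 : ℝ) :=
            Finset.prod_congr rfl (fun m hm => by
              rw [if_neg (Finset.ne_of_mem_erase (Finset.mem_of_mem_erase hm)),
                if_neg (Finset.ne_of_mem_erase hm)])
          rw [Finset.prod_congr rfl (fun m _ => h3 m),
            prod_split_two huv
              (fun m => if m = u then n x else if m = v then ∑ y, G x y * n y else 1),
            e2]
          simp [huv.symm]
  calc ∑ t : α → Fin K, G (t u) (t v) * ∏ m, n (t m)
      = ∑ t : α → Fin K, ∑ x, (if t u = x then G x (t v) else 0) * ∏ m, n (t m) :=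
        Finset.sum_congr rfl fun t _ => h0 t
    _ = ∑ x, ∑ t : α → Fin K, (if t u = x then G x (t v) else 0) * ∏ m, n (t m) :=
        Finset.sum_comm
    _ = ∑ x, n x * ∑ y, G x y * n y := Finset.sum_congr rfl fun x _ => h2 x

/-- Lemma, part 2. With `p_{rs} = c_{rs}/N`, for a hyperedge `e` with
`|e| ≥ 2`, distinct nodes `i, j ∈ e` with fixed communities `t_i = a`, `t_j = b`, summing
`(Σ_{{r,s}⊆e} p_{t_r t_s}) · ∏_{m∈e∖{i,j}} n_{t_m}` over all community assignments of the other
nodes of `e` gives `(1/N)·[c_{ab} + c·(|e|−2)·(2 + (|e|−3)/2)]`, under the constant expected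
group degree assumption. -/
theorem sum_pi_prod_messages_erase_two {K : ℕ} (hK : 1 ≤ K)
    (c : Fin K → Fin K → ℝ) (hcsym : ∀ a b, c a b = c b a) (hcnn : ∀ a b, 0 ≤ c a b)
    (n : Fin K → ℝ) (hn : ∀ a, 0 ≤ n a) (hn1 : ∑ a, n a = 1)
    (cbar : ℝ) (hcbar : 0 < cbar) (hdeg : ∀ a, ∑ b, c a b * n b = cbar)
    {ι : Type*} [LinearOrder ι] (N : ℝ) (hN : 0 < N)
    (e : Finset ι) (he : 2 ≤ e.card) (i j : ι) (hi : i ∈ e) (hj : j ∈ e) (hij : i ≠ j)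
    (a b : Fin K) :
    ∑ t : {x // x ∈ (e.erase i).erase j} → Fin K,
      (∑ rs ∈ (e ×ˢ e).filter fun rs => rs.1 < rs.2,
          c (if h : rs.1 ∈ (e.erase i).erase j then t ⟨rs.1, h⟩
              else if rs.1 = i then a else b)
            (if h : rs.2 ∈ (e.erase i).erase j then t ⟨rs.2, h⟩
              else if rs.2 = i then a else b) / N)
        * ∏ m : {x // x ∈ (e.erase i).erase j}, n (t m)
      = (1 / N) * (c a b + cbar * ((e.card : ℝ) - 2) * (2 + ((e.card : ℝ) - 3) / 2)) := by
  classical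
  have key : ∀ rs ∈ (e ×ˢ e).filter fun rs : ι × ι => rs.1 < rs.2,
      (∑ t : {x // x ∈ (e.erase i).erase j} → Fin K,
        c (if h : rs.1 ∈ (e.erase i).erase j then t ⟨rs.1, h⟩
            else if rs.1 = i then a else b)
          (if h : rs.2 ∈ (e.erase i).erase j then t ⟨rs.2, h⟩
            else if rs.2 = i then a else b)
          * ∏ m : {x // x ∈ (e.erase i).erase j}, n (t m))
      = if rs.1 ∈ (e.erase i).erase j ∨ rs.2 ∈ (e.erase i).erase j then cbar
        else c a b := by
    intro rs hrs
    simp only [Finset.mem_filter, Finset.mem_product] at hrs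
    obtain ⟨⟨h1e, h2e⟩, hlt⟩ := hrs
    have hne : rs.1 ≠ rs.2 := ne_of_lt hlt
    by_cases m1 : rs.1 ∈ (e.erase i).erase j
    · by_cases m2 : rs.2 ∈ (e.erase i).erase j
      · rw [if_pos (Or.inl m1)]
        simp only [dif_pos m1, dif_pos m2]
        have huv : (⟨rs.1, m1⟩ : {x // x ∈ (e.erase i).erase j}) ≠ ⟨rs.2, m2⟩ :=
          fun h => hne (congrArg Subtype.val h)
        rw [sum_two_marked n hn1 huv c]
        have h2 : ∀ x : Fin K, n x * ∑ y, c x y * n y = n x * cbar := by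
          intro x; rw [hdeg]
        rw [Finset.sum_congr rfl fun x _ => h2 x, ← Finset.sum_mul, hn1, one_mul]
      · rw [if_pos (Or.inl m1)]
        simp only [dif_pos m1, dif_neg m2]
        refine Eq.trans (sum_one_marked n hn1 (⟨rs.1, m1⟩ : {x // x ∈ (e.erase i).erase j})
          (fun x => c x (if rs.2 = i then a else b))) ?_
        have h2 : ∀ x : Fin K, c x (if rs.2 = i then a else b) * n x
            = c (if rs.2 = i then a else b) x * n x := by
          intro x; rw [hcsym]
        rw [Finset.sum_congr rfl fun x _ => h2 x, hdeg]
    · by_cases m2 : rs.2 ∈ (e.erase i).erase j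
      · rw [if_pos (Or.inr m2)]
        simp only [dif_neg m1, dif_pos m2]
        refine Eq.trans (sum_one_marked n hn1 (⟨rs.2, m2⟩ : {x // x ∈ (e.erase i).erase j})
          (fun x => c (if rs.1 = i then a else b) x)) ?_
        exact hdeg _
      · rw [if_neg (show ¬(rs.1 ∈ (e.erase i).erase j ∨ rs.2 ∈ (e.erase i).erase j)
          from by tauto)]
        simp only [dif_neg m1, dif_neg m2]
        rw [← Finset.mul_sum, sum_prod_n n hn1, mul_one]
        have e1 : rs.1 = i ∨ rs.1 = j := by
          by_contra hc; push_neg at hc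
          exact m1 (Finset.mem_erase.2 ⟨hc.2, Finset.mem_erase.2 ⟨hc.1, h1e⟩⟩)
        have e2 : rs.2 = i ∨ rs.2 = j := by
          by_contra hc; push_neg at hc
          exact m2 (Finset.mem_erase.2 ⟨hc.2, Finset.mem_erase.2 ⟨hc.1, h2e⟩⟩)
        rcases e1 with h1' | h1' <;> rcases e2 with h2' | h2'
        · exact absurd (h1'.trans h2'.symm) hne
        · have hni : ¬(rs.2 = i) := by rw [h2']; exact fun h => hij h.symm
          rw [if_pos h1', if_neg hni]
        · have hni : ¬(rs.1 = i) := by rw [h1']; exact fun h => hij h.symm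
          rw [if_neg hni, if_pos h2']
          exact hcsym b a
        · exact absurd (h1'.trans h2'.symm) hne
  simp_rw [← Finset.sum_div, div_mul_eq_mul_div, Finset.sum_mul]
  rw [← Finset.sum_div, Finset.sum_comm, Finset.sum_congr rfl key]
  -- counting
  set P := (e ×ˢ e).filter (fun rs : ι × ι => rs.1 < rs.2) with hPdef
  have hPgt : ((e ×ˢ e).filter (fun rs : ι × ι => rs.2 < rs.1)).card = P.card := by
    apply Finset.card_bij (fun p _ => Prod.swap p)
    · intro p hp
      simp only [Finset.mem_filter, Finset.mem_product, hPdef, Prod.fst_swap, Prod.snd_swap] at *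
      exact ⟨⟨hp.1.2, hp.1.1⟩, hp.2⟩
    · intro p _ q _ h; exact Prod.swap_injective h
    · intro p hp
      refine ⟨p.swap, ?_, by simp⟩
      simp only [Finset.mem_filter, Finset.mem_product, hPdef, Prod.fst_swap,
        Prod.snd_swap] at *
      exact ⟨⟨hp.1.2, hp.1.1⟩, hp.2⟩
  have hcardP : 2 * P.card = e.card * e.card - e.card := by
    have hunion : P ∪ (e ×ˢ e).filter (fun rs : ι × ι => rs.2 < rs.1) = e.offDiag := by
      ext p
      simp only [Finset.mem_union, Finset.mem_filter, Finset.mem_product, hPdef,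
        Finset.mem_offDiag]
      constructor
      · rintro (⟨⟨hp1, hp2⟩, h⟩ | ⟨⟨hp1, hp2⟩, h⟩)
        · exact ⟨hp1, hp2, ne_of_lt h⟩
        · exact ⟨hp1, hp2, (ne_of_lt h).symm⟩
      · rintro ⟨hp1, hp2, hne⟩
        rcases lt_or_gt_of_ne hne with h | h
        · exact Or.inl ⟨⟨hp1, hp2⟩, h⟩
        · exact Or.inr ⟨⟨hp1, hp2⟩, h⟩
    have hdisj : Disjoint P ((e ×ˢ e).filter (fun rs : ι × ι => rs.2 < rs.1)) := by
      rw [Finset.disjoint_left]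
      intro p hp hq
      simp only [Finset.mem_filter, hPdef] at hp hq
      exact absurd hq.2 (not_lt_of_gt hp.2)
    have := Finset.card_union_of_disjoint hdisj
    rw [hunion, Finset.offDiag_card] at this
    omega
  have hcard0 : (P.filter fun rs : ι × ι =>
      ¬(rs.1 ∈ (e.erase i).erase j ∨ rs.2 ∈ (e.erase i).erase j)).card = 1 := by
    have hmem0 : ∀ rs : ι × ι, rs ∈ P.filter (fun rs : ι × ι =>
        ¬(rs.1 ∈ (e.erase i).erase j ∨ rs.2 ∈ (e.erase i).erase j)) ↔
        (rs = (i, j) ∧ i < j) ∨ (rs = (j, i) ∧ j < i) := by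
      intro rs
      simp only [Finset.mem_filter, Finset.mem_product, hPdef, not_or]
      constructor
      · rintro ⟨⟨⟨h1e, h2e⟩, hlt⟩, hn1', hn2'⟩
        have hne : rs.1 ≠ rs.2 := ne_of_lt hlt
        have e1 : rs.1 = i ∨ rs.1 = j := by
          by_contra hc; push_neg at hc
          exact hn1' (Finset.mem_erase.2 ⟨hc.2, Finset.mem_erase.2 ⟨hc.1, h1e⟩⟩)
        have e2 : rs.2 = i ∨ rs.2 = j := by
          by_contra hc; push_neg at hc
          exact hn2' (Finset.mem_erase.2 ⟨hc.2, Finset.mem_erase.2 ⟨hc.1, h2e⟩⟩)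
        rcases e1 with h1' | h1' <;> rcases e2 with h2' | h2'
        · exact absurd (h1'.trans h2'.symm) hne
        · exact Or.inl ⟨Prod.ext h1' h2', h1' ▸ h2' ▸ hlt⟩
        · exact Or.inr ⟨Prod.ext h1' h2', h1' ▸ h2' ▸ hlt⟩
        · exact absurd (h1'.trans h2'.symm) hne
      · rintro (⟨rfl, hlt⟩ | ⟨rfl, hlt⟩)
        · refine ⟨⟨⟨hi, hj⟩, hlt⟩, ?_, ?_⟩
          · exact fun h => (Finset.mem_erase.1 (Finset.mem_of_mem_erase h)).1 rfl
          · exact fun h => (Finset.mem_erase.1 h).1 rfl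
        · refine ⟨⟨⟨hj, hi⟩, hlt⟩, ?_, ?_⟩
          · exact fun h => (Finset.mem_erase.1 h).1 rfl
          · exact fun h => (Finset.mem_erase.1 (Finset.mem_of_mem_erase h)).1 rfl
    rcases lt_or_gt_of_ne hij with hlt | hlt
    · have : P.filter (fun rs : ι × ι =>
          ¬(rs.1 ∈ (e.erase i).erase j ∨ rs.2 ∈ (e.erase i).erase j)) = {(i, j)} := by
        ext rs
        rw [hmem0, Finset.mem_singleton]
        constructor
        · rintro (⟨rfl, _⟩ | ⟨rfl, h⟩)
          · rfl
          · exact absurd hlt (not_lt_of_gt h)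
        · rintro rfl; exact Or.inl ⟨rfl, hlt⟩
      rw [this, Finset.card_singleton]
    · have : P.filter (fun rs : ι × ι =>
          ¬(rs.1 ∈ (e.erase i).erase j ∨ rs.2 ∈ (e.erase i).erase j)) = {(j, i)} := by
        ext rs
        rw [hmem0, Finset.mem_singleton]
        constructor
        · rintro (⟨rfl, h⟩ | ⟨rfl, _⟩)
          · exact absurd hlt (not_lt_of_gt h)
          · rfl
        · rintro rfl; exact Or.inr ⟨rfl, hlt⟩
      rw [this, Finset.card_singleton]
  have hcard1 : (P.filter fun rs : ι × ι =>
      rs.1 ∈ (e.erase i).erase j ∨ rs.2 ∈ (e.erase i).erase j).card + 1 = P.card := by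
    rw [← hcard0]
    exact Finset.card_filter_add_card_filter_not _
  rw [Finset.sum_ite, Finset.sum_const, Finset.sum_const, hcard0, nsmul_eq_mul,
    nsmul_eq_mul]
  have hk2 : (2 : ℝ) ≤ (e.card : ℝ) := by exact_mod_cast he
  have hx2 : (2 : ℝ) * ((P.filter fun rs : ι × ι =>
      rs.1 ∈ (e.erase i).erase j ∨ rs.2 ∈ (e.erase i).erase j).card : ℝ)
      = (e.card : ℝ) * (e.card : ℝ) - (e.card : ℝ) - 2 := by
    have h1 : 2 * ((P.filter fun rs : ι × ι =>
        rs.1 ∈ (e.erase i).erase j ∨ rs.2 ∈ (e.erase i).erase j).card + 1)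
        = e.card * e.card - e.card := by rw [hcard1]; exact hcardP
    have hle : e.card ≤ e.card * e.card := Nat.le_mul_of_pos_left _ (by omega)
    have := congrArg (fun m : ℕ => (m : ℝ)) h1
    push_cast [Nat.cast_sub hle] at this
    linarith
  have hNe : N ≠ 0 := ne_of_gt hN
  push_cast
  linear_combination (cbar / (2 * N)) * hx2
end

section
/- Consider the factor graph whose variable nodes are V = {1,…,N} and whose function nodes are all subsets e ⊆ V with 2 ≤ |e| ≤ D, with an arbitrary observation A_e ∈ {0,1} for each such e and normalizing constants κ_{|e|} > 0 satisfying c·d·(d−1)/2 < N·κ_d for all 2 ≤ d ≤ D. Define the sum-product updates: for each function node e and each i ∈ e, the hyperedge-to-node message is q̂_{e→i}(a) ∝ Σ_{(t_j)_{j∈e∖{i}}∈{1,…,K}^{e∖{i}}} (π_e/κ_{|e|})^{A_e} (1 − π_e/κ_{|e|})^{1−A_e} ∏_{j∈e∖{i}} q_{j→e}(t_j) (with t_i = a and π_e = (1/N)Σ_{{r,s}⊆e,r≠s} c_{t_r t_s}), the node-to-hyperedge message is q_{i→e}(a) ∝ n_a ∏_{f ∋ i, f ≠ e} q̂_{f→i}(a),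 and the marginal is q_i(a) ∝ n_a ∏_{f ∋ i} q̂_{f→i}(a), each normalized to sum to 1 over a ∈ {1,…,K}. If additionally every n_a > 0 and Σ_{b=1}^K c_{ab} n_b = c > 0 for every a, then the messages q_{i→e}(a) = n_a and q̂_{e→i}(a) = 1/K for all incident pairs (i,e) form an exact fixed point of these updates, and the resulting marginals are q_i(a) = n_a. -/
open Finset

/-- The unnormalized sum-product hyperedge-to-node update
`q̂_{e→i}(a) ∝ Σ_{(t_j)_{j∈e∖{i}}} (π_e/κ_{|e|})^{A_e} (1 − π_e/κ_{|e|})^{1−A_e}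
∏_{j∈e∖{i}} q_{j→e}(t_j)`, where `t_i = a` and
`π_e = (1/N) Σ_{{r,s}⊆e, r≠s} c_{t_r t_s}`. -/
noncomputable def hatUpdate {N K : ℕ} (c : Fin K → Fin K → ℝ) (κ : ℕ → ℝ)
    (A : Finset (Fin N) → ℕ) (q : Fin N → Finset (Fin N) → Fin K → ℝ)
    (e : Finset (Fin N)) (i : Fin N) (a : Fin K) : ℝ :=
  ∑ t : {x // x ∈ e.erase i} → Fin K,
    (let π : ℝ := (1 / (N : ℝ)) *
        ∑ rs ∈ (e ×ˢ e).filter fun rs => rs.1 < rs.2,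
          c (if h : rs.1 ∈ e.erase i then t ⟨rs.1, h⟩ else a)
            (if h : rs.2 ∈ e.erase i then t ⟨rs.2, h⟩ else a)
    (π / κ e.card) ^ (A e) * (1 - π / κ e.card) ^ (1 - A e))
      * ∏ j : {x // x ∈ e.erase i}, q j.1 e (t j)

/-!
With every incoming message equal to `n`, the types `t_j` of the other members of `e` are i.i.d.
with law `n`, and `hatUpdate` is the expectation of the factor `x ↦ x ^ A_e * (1 - x) ^ (1 - A_e)`
at `x = π_e / κ_{|e|}`. For `A_e ∈ {0, 1}` this factor is affine, so the expectation is the factor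
at `E[π_e] / κ_{|e|}`. Each of the `C(|e|, 2)` pairs contributes `E[c_{t_r t_s}] = c`: all row sums
of `c` against `n` equal `c`, which settles a pair through `i` (using the symmetry of `c`) and,
after averaging once more, a pair avoiding `i`. Hence the update does not depend on `a`, and it is
positive because `0 < c·C(|e|, 2) / (N κ_{|e|}) < 1`, so it normalizes to `1/K`. The other two
updates are `n_a` times a factor independent of `a`, which normalizes to `n_a` since `Σ n = 1`.
-/

section ProductWeights

variable {ι α : Type*} [Fintype ι] [DecidableEq ι] [Fintype α] {p : α → ℝ}

lemma sum_prod_eq_one (hp : ∑ b, p b = 1) : ∑ t : ι → α, ∏ j, p (t j) = 1 := by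
  rw [← Fintype.prod_sum fun _ b => p b]
  simp [hp]

lemma sum_mul_prod_eq_sum_mul_sum_funSplitAt (j₀ : ι) (F : (ι → α) → ℝ) :
    ∑ t, F t * ∏ j, p (t j) =
      ∑ b, p b * ∑ s : {j // j ≠ j₀} → α,
        F ((Equiv.funSplitAt j₀ α).symm (b, s)) * ∏ j, p (s j) := by
  rw [← (Equiv.funSplitAt j₀ α).symm.sum_comp, Fintype.sum_prod_type]
  refine sum_congr rfl fun b _ => ?_
  rw [mul_sum]
  refine sum_congr rfl fun s _ => ?_
  rw [Fintype.prod_eq_mul_prod_subtype_ne _ j₀]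
  simp only [Equiv.funSplitAt_symm_apply, dite_true]
  rw [prod_congr rfl fun j _ => by rw [dif_neg j.2]]
  ring

lemma sum_apply_mul_prod (hp : ∑ b, p b = 1) (j₀ : ι) (g : α → ℝ) :
    ∑ t : ι → α, g (t j₀) * ∏ j, p (t j) = ∑ b, g b * p b := by
  rw [sum_mul_prod_eq_sum_mul_sum_funSplitAt j₀]
  simp [← mul_sum, sum_prod_eq_one hp, mul_comm]

lemma sum_apply₂_mul_prod (hp : ∑ b, p b = 1) {j₀ j₁ : ι} (h : j₀ ≠ j₁) (G : α → α → ℝ) :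
    ∑ t : ι → α, G (t j₀) (t j₁) * ∏ j, p (t j) = ∑ b, p b * ∑ b', G b b' * p b' := by
  rw [sum_mul_prod_eq_sum_mul_sum_funSplitAt j₀]
  refine sum_congr rfl fun b _ => ?_
  simp [h.symm, sum_apply_mul_prod hp (⟨j₁, h.symm⟩ : {j // j ≠ j₀}) (G b)]

lemma sum_pow_mul_one_sub_pow_mul_prod (hp : ∑ b, p b = 1) {m : ℕ} (hm : m ≤ 1)
    (Φ : (ι → α) → ℝ) :
    ∑ t, Φ t ^ m * (1 - Φ t) ^ (1 - m) * ∏ j, p (t j) =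
      (∑ t, Φ t * ∏ j, p (t j)) ^ m * (1 - ∑ t, Φ t * ∏ j, p (t j)) ^ (1 - m) := by
  interval_cases m <;> simp [sub_mul, sum_sub_distrib, sum_prod_eq_one hp]

end ProductWeights

section ConstantDegree

variable {α V : Type*} [Fintype α] {c : α → α → ℝ} {n : α → ℝ} {cbar : ℝ}

lemma sum_dite_mem_mul_prod [DecidableEq V] (hcsym : ∀ a b, c a b = c b a) (hn1 : ∑ b, n b = 1)
    (hdeg : ∀ a, ∑ b, c a b * n b = cbar) (s : Finset V) (a : α) {r r' : V} (hrr' : r ≠ r')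
    (hmem : r ∈ s ∨ r' ∈ s) :
    ∑ t : {x // x ∈ s} → α,
      c (if h : r ∈ s then t ⟨r, h⟩ else a) (if h : r' ∈ s then t ⟨r', h⟩ else a) *
        ∏ j, n (t j) = cbar := by
  by_cases hr : r ∈ s <;> by_cases hr' : r' ∈ s <;> simp only [hr, hr', dite_true, dite_false]
  · have hne : (⟨r, hr⟩ : {x // x ∈ s}) ≠ ⟨r', hr'⟩ := Subtype.coe_ne_coe.1 hrr'
    rw [sum_apply₂_mul_prod hn1 hne]
    simp [hdeg, ← sum_mul, hn1]
  · rw [sum_apply_mul_prod hn1 _ (c · a)]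
    simpa [hcsym _ a] using hdeg a
  · rw [sum_apply_mul_prod hn1 _ (c a), hdeg]
  · exact (hmem.elim hr hr').elim

lemma sum_sum_filter_lt_mul_prod [LinearOrder V] (hcsym : ∀ a b, c a b = c b a)
    (hn1 : ∑ b, n b = 1) (hdeg : ∀ a, ∑ b, c a b * n b = cbar) (e : Finset V) (i : V) (a : α) :
    ∑ t : {x // x ∈ e.erase i} → α,
      (∑ rs ∈ (e ×ˢ e).filter fun rs => rs.1 < rs.2,
        c (if h : rs.1 ∈ e.erase i then t ⟨rs.1, h⟩ else a)
          (if h : rs.2 ∈ e.erase i then t ⟨rs.2, h⟩ else a)) * ∏ j, n (t j) =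
      (#e).choose 2 * cbar := by
  simp_rw [sum_mul]
  rw [sum_comm, ← card_product_filter_lt, ← nsmul_eq_mul, ← sum_const]
  refine sum_congr rfl fun rs hrs => ?_
  obtain ⟨⟨hr, hr'⟩, hlt⟩ := by simpa only [mem_filter, mem_product] using hrs
  refine sum_dite_mem_mul_prod hcsym hn1 hdeg _ a hlt.ne ?_
  by_cases hi : rs.1 = i
  · exact .inr (mem_erase.2 ⟨hi ▸ hlt.ne', hr'⟩)
  · exact .inl (mem_erase.2 ⟨hi, hr⟩)

end ConstantDegree

lemma hatUpdate_const_messages {N K : ℕ} {c : Fin K → Fin K → ℝ} {n : Fin K → ℝ} {cbar : ℝ}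
    (hcsym : ∀ a b, c a b = c b a) (hn1 : ∑ b, n b = 1) (hdeg : ∀ a, ∑ b, c a b * n b = cbar)
    (κ : ℕ → ℝ) (A : Finset (Fin N) → ℕ) {e : Finset (Fin N)} (hA : A e ≤ 1) (i : Fin N)
    (a : Fin K) :
    hatUpdate c κ A (fun _ _ b => n b) e i a =
      (1 / (N : ℝ) * ((#e).choose 2 * cbar) / κ #e) ^ A e *
        (1 - 1 / (N : ℝ) * ((#e).choose 2 * cbar) / κ #e) ^ (1 - A e) := by
  rw [hatUpdate, sum_pow_mul_one_sub_pow_mul_prod hn1 hA]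
  simp_rw [show ∀ s q : ℝ, 1 / (N : ℝ) * s / κ #e * q = 1 / N / κ #e * (s * q) from
    fun _ _ => by ring, ← mul_sum, sum_sum_filter_lt_mul_prod hcsym hn1 hdeg, div_mul_eq_mul_div]

lemma div_sum_eq_one_div_card {α : Type*} [Fintype α] {f : α → ℝ} {x : ℝ} (hf : ∀ b, f b = x)
    (hx : x ≠ 0) (a : α) : f a / ∑ b, f b = 1 / Fintype.card α := by
  simp only [hf, sum_const, card_univ, nsmul_eq_mul]
  field_simp

lemma mul_div_sum_mul_eq_of_sum_eq_one {α : Type*} [Fintype α] {n : α → ℝ} (hn1 : ∑ b, n b = 1)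
    {C : ℝ} (hC : C ≠ 0) (a : α) : n a * C / ∑ b, n b * C = n a := by
  rw [← sum_mul, hn1, one_mul, mul_div_cancel_right₀ _ hC]

theorem constant_messages_fixed_point_general {N K D : ℕ}
    (c : Fin K → Fin K → ℝ) (hcsym : ∀ a b, c a b = c b a)
    (n : Fin K → ℝ) (hn1 : ∑ a, n a = 1)
    (cbar : ℝ) (hcbar : 0 < cbar) (hdeg : ∀ a, ∑ b, c a b * n b = cbar)
    (κ : ℕ → ℝ)
    (hκ : ∀ d : ℕ, 2 ≤ d → d ≤ D → cbar * (d : ℝ) * ((d : ℝ) - 1) / 2 < (N : ℝ) * κ d)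
    (A : Finset (Fin N) → ℕ) (hA : ∀ e, A e ≤ 1) :
    ∀ e ∈ (univ : Finset (Finset (Fin N))).filter fun e => 2 ≤ e.card ∧ e.card ≤ D,
      ∀ i ∈ e, ∀ a : Fin K,
        -- the normalized hyperedge-to-node update returns the message `1/K`
        (hatUpdate c κ A (fun _ _ b => n b) e i a
            / ∑ b, hatUpdate c κ A (fun _ _ b => n b) e i b = 1 / (K : ℝ))
        ∧
        -- the normalized node-to-hyperedge update returns the message `n a`
        ((n a * ∏ f ∈ (univ : Finset (Finset (Fin N))).filter
              (fun f => (2 ≤ f.card ∧ f.card ≤ D) ∧ i ∈ f ∧ f ≠ e), (1 / (K : ℝ)))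
            / ∑ b, n b * ∏ f ∈ (univ : Finset (Finset (Fin N))).filter
              (fun f => (2 ≤ f.card ∧ f.card ≤ D) ∧ i ∈ f ∧ f ≠ e), (1 / (K : ℝ))
          = n a)
        ∧
        -- the resulting normalized marginal is `n a`
        ((n a * ∏ f ∈ (univ : Finset (Finset (Fin N))).filter
              (fun f => (2 ≤ f.card ∧ f.card ≤ D) ∧ i ∈ f), (1 / (K : ℝ)))
            / ∑ b, n b * ∏ f ∈ (univ : Finset (Finset (Fin N))).filter
              (fun f => (2 ≤ f.card ∧ f.card ≤ D) ∧ i ∈ f), (1 / (K : ℝ))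
          = n a) := by
  intro e he i _ a
  obtain ⟨hd2, hdD⟩ := (mem_filter.1 he).2
  have hK : (1 / K : ℝ) ≠ 0 := one_div_ne_zero (Nat.cast_ne_zero.2 a.pos.ne')
  refine ⟨?_, mul_div_sum_mul_eq_of_sum_eq_one hn1 (prod_ne_zero_iff.2 fun _ _ => hK) a,
    mul_div_sum_mul_eq_of_sum_eq_one hn1 (prod_ne_zero_iff.2 fun _ _ => hK) a⟩
  set w := 1 / (N : ℝ) * ((#e).choose 2 * cbar) / κ #e with hw_def
  have hw : w = cbar * #e * (#e - 1) / 2 / (N * κ #e) := by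
    rw [hw_def, Nat.cast_choose_two]; ring
  have hL : 0 < cbar * #e * (#e - 1) / 2 := by
    have : (2 : ℝ) ≤ #e := by exact_mod_cast hd2
    have : (0 : ℝ) < #e - 1 := by linarith
    positivity
  have hLκ := hκ _ hd2 hdD
  have hw0 : 0 < w := hw ▸ div_pos hL (hL.trans hLκ)
  have hw1 : w < 1 := hw ▸ (div_lt_one (hL.trans hLκ)).2 hLκ
  rw [div_sum_eq_one_div_card (hatUpdate_const_messages hcsym hn1 hdeg κ A (hA e) i)
    (mul_pos (pow_pos hw0 _) (pow_pos (sub_pos.2 hw1) _)).ne', Fintype.card_fin]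

/-- On the factor graph with variable nodes `V = Fin N` and function nodes all
subsets `e` with `2 ≤ |e| ≤ D`, with arbitrary observations `A_e ∈ {0,1}` and normalizing
constants `κ_d > 0` with `c·d·(d−1)/2 < N·κ_d`, if `n_a > 0` for all `a` and
`Σ_b c_{ab} n_b = c > 0` for every `a`, then the messages `q_{i→e}(a) = n_a`,
`q̂_{e→i}(a) = 1/K` form an exact fixed point of the (normalized) sum-product updates, and the
resulting marginals are `q_i(a) = n_a`. -/
theorem constant_messages_fixed_point {N K D : ℕ} (hK : 1 ≤ K) (hD : 2 ≤ D) (hDN : D ≤ N)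
    (c : Fin K → Fin K → ℝ) (hcsym : ∀ a b, c a b = c b a) (hcnn : ∀ a b, 0 ≤ c a b)
    (n : Fin K → ℝ) (hn : ∀ a, 0 < n a) (hn1 : ∑ a, n a = 1)
    (cbar : ℝ) (hcbar : 0 < cbar) (hdeg : ∀ a, ∑ b, c a b * n b = cbar)
    (κ : ℕ → ℝ) (hκpos : ∀ d, 2 ≤ d → d ≤ D → 0 < κ d)
    (hκ : ∀ d : ℕ, 2 ≤ d → d ≤ D → cbar * (d : ℝ) * ((d : ℝ) - 1) / 2 < (N : ℝ) * κ d)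
    (A : Finset (Fin N) → ℕ) (hA : ∀ e, A e ≤ 1) :
    ∀ e ∈ (univ : Finset (Finset (Fin N))).filter fun e => 2 ≤ e.card ∧ e.card ≤ D,
      ∀ i ∈ e, ∀ a : Fin K,
        -- the normalized hyperedge-to-node update returns the message `1/K`
        (hatUpdate c κ A (fun _ _ b => n b) e i a
            / ∑ b, hatUpdate c κ A (fun _ _ b => n b) e i b = 1 / (K : ℝ))
        ∧
        -- the normalized node-to-hyperedge update returns the message `n a`
        ((n a * ∏ f ∈ (univ : Finset (Finset (Fin N))).filter
              (fun f => (2 ≤ f.card ∧ f.card ≤ D) ∧ i ∈ f ∧ f ≠ e), (1 / (K : ℝ)))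
            / ∑ b, n b * ∏ f ∈ (univ : Finset (Finset (Fin N))).filter
              (fun f => (2 ≤ f.card ∧ f.card ≤ D) ∧ i ∈ f ∧ f ≠ e), (1 / (K : ℝ))
          = n a)
        ∧
        -- the resulting normalized marginal is `n a`
        ((n a * ∏ f ∈ (univ : Finset (Finset (Fin N))).filter
              (fun f => (2 ≤ f.card ∧ f.card ≤ D) ∧ i ∈ f), (1 / (K : ℝ)))
            / ∑ b, n b * ∏ f ∈ (univ : Finset (Finset (Fin N))).filter
              (fun f => (2 ≤ f.card ∧ f.card ≤ D) ∧ i ∈ f), (1 / (K : ℝ))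
          = n a) :=
  constant_messages_fixed_point_general c hcsym n hn1 cbar hcbar hdeg κ hκ A hA
end

section
/- Let N > 0 be a real number, let i be a node, and let 𝒢 be a finite family of finite sets (hyperedges), each containing i and each of size at least 2. For message vectors q_{j→g} ∈ ℝ^K (one for each g ∈ 𝒢 and j ∈ g∖{i}), define M_g(a) = Σ_{(t_j)_{j∈g∖{i}}∈{1,…,K}^{g∖{i}}} ((1/N)·Σ_{{r,s}⊆g, r≠s} c_{t_r t_s}) · ∏_{j∈g∖{i}} q_{j→g}(t_j) (with t_i = a), and Z = Σ_{a=1}^K n_a ∏_{g∈𝒢} M_g(a). Then, evaluated at the fixed point where q_{j→g} = n for every g ∈ 𝒢 and j ∈ g∖{i}, one has Z = ∏_{g∈𝒢} c·|g|·(|g|−1)/(2N). -/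
open Finset

/-!
At the fixed point the weight `∏ⱼ n (tⱼ)` makes the labels `tⱼ` of the vertices `j ≠ i`
independent with law `n`, so `M_g(a)` is `1/N` times the sum, over the pairs `r < s` of `g`,
of the expected affinity between the labels of `r` and `s` (the label of `i` being `a`).
The constant expected degree assumption, together with the symmetry of `c` when `i` is the
larger vertex of the pair, makes each of these expectations equal to `cbar`, whatever `a` is.
Hence `M_g(a) = cbar · (|g| choose 2) / N` for every `a`, and `Z` is the product of these
values because `n` sums to one.
-/

/-- The quantity `M_g(a) = Σ_{(t_j)_{j∈g∖{i}}} ((1/N)·Σ_{{r,s}⊆g, r≠s} c_{t_r t_s}) ·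
∏_{j∈g∖{i}} q_{j→g}(t_j)`, with `t_i = a`. -/
noncomputable def Mmsg {K : ℕ} {ι : Type*} [LinearOrder ι] (N : ℝ) (c : Fin K → Fin K → ℝ)
    (i : ι) (q : Finset ι → ι → Fin K → ℝ) (g : Finset ι) (a : Fin K) : ℝ :=
  ∑ t : {x // x ∈ g.erase i} → Fin K,
    ((1 / N) * ∑ rs ∈ (g ×ˢ g).filter fun rs => rs.1 < rs.2,
        c (if h : rs.1 ∈ g.erase i then t ⟨rs.1, h⟩ else a)
          (if h : rs.2 ∈ g.erase i then t ⟨rs.2, h⟩ else a))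
      * ∏ j : {x // x ∈ g.erase i}, q g j.1 (t j)

section ProductWeights

variable {κ β R : Type*} [Fintype κ] [DecidableEq κ] [Fintype β] [CommSemiring R] (n : β → R)

theorem sum_prod_apply_mul_prod (φ : κ → β → R) :
    ∑ t : κ → β, (∏ j, φ j (t j)) * ∏ j, n (t j) = ∏ j, ∑ b, φ j b * n b := by
  simp_rw [← prod_mul_distrib]
  exact (Fintype.prod_sum fun j b => φ j b * n b).symm

omit [Fintype β] in
theorem prod_mulSingle_apply (f : β → R) (r : κ) (t : κ → β) :
    ∏ j, (Pi.mulSingle r f : κ → β → R) j (t j) = f (t r) := by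
  simp [Pi.mulSingle_apply, ite_apply]

variable {n}

theorem sum_apply_mul_prod_s6 (hn : ∑ b, n b = 1) (f : β → R) (r : κ) :
    ∑ t : κ → β, f (t r) * ∏ j, n (t j) = ∑ b, f b * n b := by
  simpa [Pi.mulSingle_apply, ite_apply, apply_ite, hn] using
    sum_prod_apply_mul_prod n (Pi.mulSingle r f)

theorem sum_apply_mul_apply_mul_prod (hn : ∑ b, n b = 1) (f g : β → R) {r s : κ}
    (hrs : r ≠ s) :
    ∑ t : κ → β, f (t r) * g (t s) * ∏ j, n (t j) = (∑ b, f b * n b) * ∑ b, g b * n b := by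
  have h := sum_prod_apply_mul_prod n (Pi.mulSingle r f * Pi.mulSingle s g : κ → β → R)
  have hj : ∀ j, ∑ b, (Pi.mulSingle r f * Pi.mulSingle s g : κ → β → R) j b * n b
      = (Pi.mulSingle r (∑ b, f b * n b) : κ → R) j
        * (Pi.mulSingle s (∑ b, g b * n b) : κ → R) j := by
    intro j
    by_cases hr : j = r
    · subst hr; simp [hrs]
    · by_cases hs : j = s
      · subst hs; simp [hr]
      · simp [hr, hs, hn]
  simp only [hj] at h
  simpa only [Pi.mul_apply, prod_mul_distrib, prod_mulSingle_apply,
    Fintype.prod_pi_mulSingle'] using h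

theorem sum_apply₂_mul_prod_s6 [DecidableEq β] (hn : ∑ b, n b = 1) (F : β → β → R) {r s : κ}
    (hrs : r ≠ s) :
    ∑ t : κ → β, F (t r) (t s) * ∏ j, n (t j) = ∑ b', (∑ b, F b b' * n b) * n b' := by
  have hF : ∀ x y, F x y = ∑ b', F x b' * if y = b' then 1 else 0 := by
    intro x y
    simp only [mul_ite, mul_one, mul_zero, sum_ite_eq, mem_univ, if_true]
  rw [sum_congr rfl fun t _ => by rw [hF, sum_mul], sum_comm]
  refine sum_congr rfl fun b' _ => ?_
  refine (sum_apply_mul_apply_mul_prod hn (F · b') (fun y => if y = b' then 1 else 0) hrs).trans ?_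
  simp

end ProductWeights

section FixedPoint

variable {K : ℕ} {c : Fin K → Fin K → ℝ} {n : Fin K → ℝ} {cbar : ℝ} {ι : Type*}

theorem sum_pair_mul_prod_eq_cbar [DecidableEq ι] (hcsym : ∀ a b, c a b = c b a)
    (hn1 : ∑ a, n a = 1) (hdeg : ∀ a, ∑ b, c a b * n b = cbar) {g : Finset ι} {i r s : ι}
    (hr : r ∈ g) (hs : s ∈ g) (hrs : r ≠ s) (a : Fin K) :
    ∑ t : {x // x ∈ g.erase i} → Fin K,
      c (if h : r ∈ g.erase i then t ⟨r, h⟩ else a) (if h : s ∈ g.erase i then t ⟨s, h⟩ else a)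
        * ∏ j, n (t j) = cbar := by
  by_cases hr' : r ∈ g.erase i <;> by_cases hs' : s ∈ g.erase i
  · simp only [dif_pos hr', dif_pos hs']
    rw [sum_apply₂_mul_prod_s6 hn1 c (by simpa using hrs)]
    simp_rw [fun b' => (sum_congr rfl fun b _ => by rw [hcsym b b'] :
      ∑ b, c b b' * n b = ∑ b, c b' b * n b), hdeg, ← mul_sum, hn1, mul_one]
  · simp only [dif_pos hr', dif_neg hs']
    rw [sum_apply_mul_prod_s6 hn1 (c · a), ← hdeg a]
    simp_rw [hcsym _ a]
  · simp only [dif_neg hr', dif_pos hs']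
    rw [sum_apply_mul_prod_s6 hn1 (c a), hdeg a]
  · have hri : r = i := by simpa [hr] using hr'
    have hsi : s = i := by simpa [hs] using hs'
    exact absurd (hri.trans hsi.symm) hrs

theorem Mmsg_fixed_point [LinearOrder ι] (hcsym : ∀ a b, c a b = c b a) (hn1 : ∑ a, n a = 1)
    (hdeg : ∀ a, ∑ b, c a b * n b = cbar) (N : ℝ) (i : ι) (g : Finset ι) (a : Fin K) :
    Mmsg N c i (fun _ _ b => n b) g a = cbar * g.card * (g.card - 1) / (2 * N) := by
  calc Mmsg N c i (fun _ _ b => n b) g a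
      = 1 / N * ∑ rs ∈ (g ×ˢ g).filter fun rs => rs.1 < rs.2,
          ∑ t : {x // x ∈ g.erase i} → Fin K,
            c (if h : rs.1 ∈ g.erase i then t ⟨rs.1, h⟩ else a)
              (if h : rs.2 ∈ g.erase i then t ⟨rs.2, h⟩ else a) * ∏ j, n (t j) := by
        rw [Mmsg, sum_comm, mul_sum]
        simp_rw [mul_assoc, sum_mul]
    _ = 1 / N * ∑ _rs ∈ (g ×ˢ g).filter fun rs => rs.1 < rs.2, cbar := by
        refine congrArg _ (sum_congr rfl fun rs hrs => ?_)
        simp only [mem_filter, mem_product] at hrs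
        exact sum_pair_mul_prod_eq_cbar hcsym hn1 hdeg hrs.1.1 hrs.1.2 hrs.2.ne a
    _ = cbar * g.card * (g.card - 1) / (2 * N) := by
        rw [sum_const, card_product_filter_lt, nsmul_eq_mul, Nat.cast_choose_two]
        ring

end FixedPoint

theorem normalizing_constant_at_fixed_point_general {K : ℕ}
    (c : Fin K → Fin K → ℝ) (hcsym : ∀ a b, c a b = c b a)
    (n : Fin K → ℝ) (hn1 : ∑ a, n a = 1)
    (cbar : ℝ) (hdeg : ∀ a, ∑ b, c a b * n b = cbar)
    {ι : Type*} [LinearOrder ι] (N : ℝ)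
    (i : ι) (𝒢 : Finset (Finset ι)) :
    ∑ a, n a * ∏ g ∈ 𝒢, Mmsg N c i (fun _ _ b => n b) g a
      = ∏ g ∈ 𝒢, cbar * (g.card : ℝ) * ((g.card : ℝ) - 1) / (2 * N) := by
  simp_rw [Mmsg_fixed_point hcsym hn1 hdeg, ← sum_mul, hn1, one_mul]

/-- With `Z = Σ_a n_a ∏_{g∈𝒢} M_g(a)`, evaluated at the fixed point where all
messages `q_{j→g}` equal `n`, one has `Z = ∏_{g∈𝒢} c·|g|·(|g|−1)/(2N)`, under the constant
expected group degree assumption `Σ_b c_{ab} n_b = c` for all `a`. -/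
theorem normalizing_constant_at_fixed_point {K : ℕ} (hK : 1 ≤ K)
    (c : Fin K → Fin K → ℝ) (hcsym : ∀ a b, c a b = c b a) (hcnn : ∀ a b, 0 ≤ c a b)
    (n : Fin K → ℝ) (hn : ∀ a, 0 ≤ n a) (hn1 : ∑ a, n a = 1)
    (cbar : ℝ) (hcbar : 0 < cbar) (hdeg : ∀ a, ∑ b, c a b * n b = cbar)
    {ι : Type*} [LinearOrder ι] (N : ℝ) (hN : 0 < N)
    (i : ι) (𝒢 : Finset (Finset ι)) (h𝒢 : ∀ g ∈ 𝒢, i ∈ g ∧ 2 ≤ g.card) :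
    ∑ a, n a * ∏ g ∈ 𝒢, Mmsg N c i (fun _ _ b => n b) g a
      = ∏ g ∈ 𝒢, cbar * (g.card : ℝ) * ((g.card : ℝ) - 1) / (2 * N) :=
  normalizing_constant_at_fixed_point_general c hcsym n hn1 cbar hdeg N i 𝒢
end

section
/- With Z defined as a function of the message vectors q_{j→g} ∈ ℝ^K as follows: M_g(a) = Σ_{(t_j)_{j∈g∖{i}}∈{1,…,K}^{g∖{i}}} ((1/N)·Σ_{{r,s}⊆g, r≠s} c_{t_r t_s}) · ∏_{j∈g∖{i}} q_{j→g}(t_j) (with t_i = a) and Z = Σ_{a=1}^K n_a ∏_{g∈𝒢} M_g(a), fix f ∈ 𝒢, j ∈ f∖{i} and b ∈ {1,…,K}. Then the partial derivative of Z with respect to the coordinate q_{j→f}(b), evaluated at the point where every message q_{j'→g} equals n, is (c/N) · ( ∏_{g∈𝒢, g≠f} c·|g|·(|g|−1)/(2N) ) · [ 1 + (|f|−2)·( 2 + (|f|−3)/2 ) ]. -/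
/-!
Only the factor `M_f` of `Z` involves the coordinate `q_{j→f}(b)`, and it is affine in it, so the
derivative is `Σ_a n_a ∂M_f(a) ∏_{g≠f} M_g(a)`. Summing out the unobserved coordinates, `M_g(a)` is
`1/N` times a sum over the pairs `{r, s} ⊆ g` of `u_r · c u_s`, where `u_k` is the marginal of `t_k`
(the message `q_{k→g}`, or `δ_a` at `i`). At the fixed point at most one marginal differs from `n`,
so by the constant degree assumption every pair contributes `c`, and `M_g(a) = c·|g|(|g|-1)/(2N)`
for every `a`. The derivative of `M_f(a)` is the same expression with `δ_b` as the message of `j`;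
averaging over `a` with weights `n` turns `δ_a` at `i` back into `n`, so every pair again
contributes `c` and the average is `(c/N)·|f|(|f|-1)/2`, the bracket of the statement.
-/

open Finset

/-- `Z = Σ_a n_a ∏_{g∈𝒢} M_g(a)` as a function of the messages. -/
noncomputable def Zfun {K : ℕ} {ι : Type*} [LinearOrder ι] (N : ℝ) (c : Fin K → Fin K → ℝ)
    (n : Fin K → ℝ) (i : ι) (𝒢 : Finset (Finset ι))
    (q : Finset ι → ι → Fin K → ℝ) : ℝ :=
  ∑ a, n a * ∏ g ∈ 𝒢, Mmsg N c i q g a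

open Matrix

section Marginal
variable {R : Type*} [CommSemiring R] {α κ : Type*} [Fintype α] [DecidableEq α]
  [Fintype κ] [DecidableEq κ] {q : α → κ → R}

theorem sum_apply_mul_prod_eq_dotProduct (hq : ∀ j, ∑ z, q j z = 1) (F : κ → R) (r : α) :
    ∑ t : α → κ, F (t r) * ∏ j, q j (t j) = q r ⬝ᵥ F := by
  let w : κ → α → κ → R := fun x j z => q j z * if j = r then if z = x then 1 else 0 else 1
  have hpin (t : α → κ) : F (t r) * ∏ j, q j (t j) = ∑ x, F x * ∏ j, w x j (t j) := by
    simp_rw [w, Finset.prod_mul_distrib, Finset.prod_ite_eq', if_pos (mem_univ r)]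
    simp
  have hmarg (x : κ) : ∏ j, ∑ z, w x j z = q r x := by
    rw [← Finset.prod_ite_eq_of_mem univ r (fun _ => q r x) (mem_univ r)]
    refine Finset.prod_congr rfl fun j _ => ?_
    by_cases hr : r = j
    · subst hr; simp [w]
    · simp [w, hr, Ne.symm hr, hq]
  calc ∑ t : α → κ, F (t r) * ∏ j, q j (t j)
      = ∑ x, F x * ∑ t : α → κ, ∏ j, w x j (t j) := by
        simp_rw [hpin, Finset.mul_sum]; exact Finset.sum_comm
    _ = q r ⬝ᵥ F := by simp_rw [← Fintype.prod_sum, hmarg, dotProduct, mul_comm]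

theorem sum_apply_apply_mul_prod_eq_dotProduct_mulVec (hq : ∀ j, ∑ z, q j z = 1)
    (F : Matrix κ κ R) {r s : α} (hrs : r ≠ s) :
    ∑ t : α → κ, F (t r) (t s) * ∏ j, q j (t j) = q r ⬝ᵥ F *ᵥ q s := by
  let w : κ → κ → α → κ → R := fun x y j z => q j z *
    (if j = r then if z = x then 1 else 0 else 1) * (if j = s then if z = y then 1 else 0 else 1)
  have hpin (t : α → κ) :
      F (t r) (t s) * ∏ j, q j (t j) = ∑ x, ∑ y, F x y * ∏ j, w x y j (t j) := by
    simp_rw [w, Finset.prod_mul_distrib, Finset.prod_ite_eq', if_pos (mem_univ _)]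
    simp
  have hmarg (x y : κ) : ∏ j, ∑ z, w x y j z = q r x * q s y := by
    rw [← Finset.prod_ite_eq_of_mem univ r (fun _ => q r x) (mem_univ r),
      ← Finset.prod_ite_eq_of_mem univ s (fun _ => q s y) (mem_univ s), ← Finset.prod_mul_distrib]
    refine Finset.prod_congr rfl fun j _ => ?_
    by_cases hr : r = j
    · subst hr; simp [w, hrs, Ne.symm hrs]
    · by_cases hs : s = j
      · subst hs; simp [w, hr, Ne.symm hr]
      · simp [w, hr, hs, Ne.symm hr, Ne.symm hs, hq]
  calc ∑ t : α → κ, F (t r) (t s) * ∏ j, q j (t j)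
      = ∑ x, ∑ y, F x y * ∑ t : α → κ, ∏ j, w x y j (t j) := by
        simp_rw [hpin, Finset.mul_sum]
        rw [Finset.sum_comm]; simp_rw [Finset.sum_comm (γ := α → κ)]
    _ = q r ⬝ᵥ F *ᵥ q s := by
        simp_rw [← Fintype.prod_sum, hmarg, dotProduct, mulVec, dotProduct, Finset.mul_sum]
        exact Finset.sum_congr rfl fun x _ => Finset.sum_congr rfl fun y _ => by ring

end Marginal

section Pairs
variable {R : Type*} [CommSemiring R] {κ : Type*} [Fintype κ] {c : Matrix κ κ R} {n : κ → R}
  {cbar : R}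

theorem dotProduct_mulVec_update_const (hc : c.IsSymm) (hcn : c *ᵥ n = fun _ => cbar)
    (hn : ∑ z, n z = 1) {v : κ → R} (hv : ∑ z, v z = 1) {ι : Type*} [DecidableEq ι]
    {k r s : ι} (hrs : r ≠ s) :
    Function.update (fun _ => n) k v r ⬝ᵥ c *ᵥ Function.update (fun _ => n) k v s = cbar := by
  have right {u : κ → R} (hu : ∑ z, u z = 1) : u ⬝ᵥ c *ᵥ n = cbar := by
    simp [hcn, dotProduct, ← Finset.sum_mul, hu]
  have left {u : κ → R} (hu : ∑ z, u z = 1) : n ⬝ᵥ c *ᵥ u = cbar := by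
    rw [dotProduct_mulVec, ← mulVec_transpose, hc.eq, dotProduct_comm, right hu]
  by_cases hr : r = k
  · subst hr
    simpa [Ne.symm hrs] using right hv
  · rw [Function.update_of_ne hr]
    by_cases hs : s = k
    · subst hs; simpa using left hv
    · simpa [hs] using left hn

theorem sum_pairs_dotProduct_mulVec_update_const (hc : c.IsSymm)
    (hcn : c *ᵥ n = fun _ => cbar) (hn : ∑ z, n z = 1) {v : κ → R} (hv : ∑ z, v z = 1)
    {ι : Type*} [LinearOrder ι] (k : ι) (g : Finset ι) :
    ∑ p ∈ g ×ˢ g with p.1 < p.2,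
        Function.update (fun _ => n) k v p.1 ⬝ᵥ c *ᵥ Function.update (fun _ => n) k v p.2
      = (#g).choose 2 * cbar := by
  rw [Finset.sum_congr rfl fun p hp =>
      dotProduct_mulVec_update_const hc hcn hn hv (mem_filter.1 hp).2.ne,
    Finset.sum_const, card_product_filter_lt, nsmul_eq_mul]

theorem sum_mul_dotProduct_mulVec_update_single [DecidableEq κ] (hn : ∑ z, n z = 1)
    {ι : Type*} [DecidableEq ι] (u : ι → κ → R) {k r s : ι} (hrs : r ≠ s) :
    ∑ a, n a * (Function.update u k (Pi.single a 1) r ⬝ᵥ c *ᵥ Function.update u k (Pi.single a 1) s)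
      = Function.update u k n r ⬝ᵥ c *ᵥ Function.update u k n s := by
  by_cases hr : r = k
  · subst hr
    simp only [Function.update_self, Function.update_of_ne (Ne.symm hrs), single_one_dotProduct]
    rfl
  · by_cases hs : s = k
    · subst hs
      simp only [Function.update_self, Function.update_of_ne hr, dotProduct_mulVec (u r) c,
        dotProduct_single_one]
      exact dotProduct_comm n _
    · simp [Function.update_of_ne hr, Function.update_of_ne hs, ← Finset.sum_mul, hn]

end Pairs

section Messages
variable {K : ℕ} {ι : Type*} [LinearOrder ι] (N : ℝ) (c : Fin K → Fin K → ℝ) (i : ι)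

theorem Mmsg_congr {Q Q' : Finset ι → ι → Fin K → ℝ} {g : Finset ι} (h : Q g = Q' g)
    (a : Fin K) : Mmsg N c i Q g a = Mmsg N c i Q' g a := by
  unfold Mmsg; rw [h]

theorem Mmsg_eq_sum_pairs (Q : Finset ι → ι → Fin K → ℝ) (g : Finset ι)
    (hQ : ∀ k ∈ g.erase i, ∑ z, Q g k z = 1) (a : Fin K) :
    Mmsg N c i Q g a = 1 / N * ∑ p ∈ g ×ˢ g with p.1 < p.2,
      Function.update (Q g) i (Pi.single a 1) p.1 ⬝ᵥ
        of c *ᵥ Function.update (Q g) i (Pi.single a 1) p.2 := by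
  unfold Mmsg
  simp_rw [mul_assoc, Finset.sum_mul, ← Finset.mul_sum]
  rw [Finset.sum_comm]
  congr 1
  refine Finset.sum_congr rfl fun p hp => ?_
  obtain ⟨⟨hr, hs⟩, hlt⟩ : (p.1 ∈ g ∧ p.2 ∈ g) ∧ p.1 < p.2 := by simpa using hp
  have hq : ∀ k : {x // x ∈ g.erase i}, ∑ z, Q g k.1 z = 1 := fun k => hQ k.1 k.2
  by_cases hri : p.1 = i
  · have hs' : p.2 ∈ g.erase i := mem_erase.2 ⟨hri ▸ hlt.ne', hs⟩
    simp only [hri, notMem_erase, dif_neg, not_false_eq_true, dif_pos hs',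
      Function.update_self, Function.update_of_ne (mem_erase.1 hs').1, single_one_dotProduct]
    rw [sum_apply_mul_prod_eq_dotProduct hq (c a) ⟨p.2, hs'⟩, dotProduct_comm]
    rfl
  · have hr' : p.1 ∈ g.erase i := mem_erase.2 ⟨hri, hr⟩
    by_cases hsi : p.2 = i
    · simp only [hsi, notMem_erase, dif_neg, not_false_eq_true, dif_pos hr',
        Function.update_self, Function.update_of_ne hri]
      rw [mulVec_single_one]
      exact sum_apply_mul_prod_eq_dotProduct hq (fun x => c x a) ⟨p.1, hr'⟩
    · have hs' : p.2 ∈ g.erase i := mem_erase.2 ⟨hsi, hs⟩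
      simp only [dif_pos hr', dif_pos hs', Function.update_of_ne hri, Function.update_of_ne hsi]
      exact sum_apply_apply_mul_prod_eq_dotProduct_mulVec hq c
        (r := ⟨p.1, hr'⟩) (s := ⟨p.2, hs'⟩) (by simpa using hlt.ne)

theorem sum_mul_Mmsg_eq_sum_pairs {n : Fin K → ℝ} (hn : ∑ z, n z = 1)
    (Q : Finset ι → ι → Fin K → ℝ) (g : Finset ι) (hQ : ∀ k ∈ g.erase i, ∑ z, Q g k z = 1) :
    ∑ a, n a * Mmsg N c i Q g a = 1 / N * ∑ p ∈ g ×ˢ g with p.1 < p.2,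
      Function.update (Q g) i n p.1 ⬝ᵥ of c *ᵥ Function.update (Q g) i n p.2 := by
  simp_rw [Mmsg_eq_sum_pairs N c i Q g hQ, Finset.mul_sum, mul_left_comm _ (1 / N)]
  rw [Finset.sum_comm]
  refine Finset.sum_congr rfl fun p hp => ?_
  rw [← Finset.mul_sum,
    sum_mul_dotProduct_mulVec_update_single hn (Q g) (mem_filter.1 hp).2.ne]

theorem Mmsg_update_add_smul (M : ι → Fin K → ℝ) {g : Finset ι} {j : ι} (hj : j ∈ g.erase i)
    (u v : Fin K → ℝ) (s : ℝ) (a : Fin K) :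
    Mmsg N c i (fun _ => Function.update M j (u + s • v)) g a
      = Mmsg N c i (fun _ => Function.update M j u) g a
        + s * Mmsg N c i (fun _ => Function.update M j v) g a := by
  let jj : {x // x ∈ g.erase i} := ⟨j, hj⟩
  have hprod (w : Fin K → ℝ) (t : {x // x ∈ g.erase i} → Fin K) :
      ∏ k, Function.update M j w k.1 (t k) = w (t jj) * ∏ k ∈ univ.erase jj, M k.1 (t k) := by
    rw [← Finset.mul_prod_erase univ _ (mem_univ jj), Function.update_self]
    congr 1
    refine Finset.prod_congr rfl fun k hk => ?_
    rw [Function.update_of_ne fun h => (mem_erase.1 hk).1 (Subtype.ext h)]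
  unfold Mmsg
  rw [Finset.mul_sum, ← Finset.sum_add_distrib]
  refine Finset.sum_congr rfl fun t _ => ?_
  simp only [hprod, Pi.add_apply, Pi.smul_apply, smul_eq_mul]
  ring

theorem Mmsg_ite_eq_add_mul {g : Finset ι} {j : ι} (hj : j ∈ g.erase i) (n : Fin K → ℝ)
    (b : Fin K) (x : ℝ) (a : Fin K) :
    Mmsg N c i (fun g' j' b' => if g' = g ∧ j' = j ∧ b' = b then x else n b') g a
      = Mmsg N c i (fun _ _ => n) g a
        + (x - n b) * Mmsg N c i (fun _ => Function.update (fun _ => n) j (Pi.single b 1)) g a := by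
  have hrow : (fun j' b' => if g = g ∧ j' = j ∧ b' = b then x else n b')
      = Function.update (fun _ => n) j (n + (x - n b) • Pi.single b 1) := by
    funext j' b'
    by_cases hj' : j' = j <;> by_cases hb' : b' = b <;> simp [hj', hb']
  rw [Mmsg_congr N c i (Q' := fun _ => Function.update _ j _) hrow,
    Mmsg_update_add_smul N c i _ hj, Function.update_eq_self]

variable {c} {n : Fin K → ℝ} {cbar : ℝ}

theorem Mmsg_const_eq (hc : (of c).IsSymm) (hcn : of c *ᵥ n = fun _ => cbar)
    (hn : ∑ z, n z = 1) (g : Finset ι) (a : Fin K) :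
    Mmsg N c i (fun _ _ => n) g a = cbar * #g * (#g - 1) / (2 * N) := by
  rw [Mmsg_eq_sum_pairs N c i _ g (fun _ _ => hn),
    sum_pairs_dotProduct_mulVec_update_const hc hcn hn (by simp) i g, Nat.cast_choose_two]
  ring

theorem sum_mul_Mmsg_update_single (hc : (of c).IsSymm)
    (hcn : of c *ᵥ n = fun _ => cbar) (hn : ∑ z, n z = 1) {g : Finset ι} {j : ι}
    (hj : j ∈ g.erase i) (b : Fin K) :
    ∑ a, n a * Mmsg N c i (fun _ => Function.update (fun _ => n) j (Pi.single b 1)) g a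
      = cbar * #g * (#g - 1) / (2 * N) := by
  have hji : i ≠ j := Ne.symm (mem_erase.1 hj).1
  have hQ (k : ι) : ∑ z, Function.update (fun _ => n) j (Pi.single b 1) k z = 1 := by
    by_cases hk : k = j
    · simp [hk]
    · simp [Function.update_of_ne hk, hn]
  rw [sum_mul_Mmsg_eq_sum_pairs N c i hn _ g fun k _ => hQ k,
    Function.update_eq_self_iff.2 (Function.update_of_ne hji (Pi.single b 1) fun _ => n).symm,
    sum_pairs_dotProduct_mulVec_update_const hc hcn hn (by simp) j g, Nat.cast_choose_two]
  ring

end Messages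

theorem deriv_normalizing_constant_at_fixed_point_general {K : ℕ}
    (c : Fin K → Fin K → ℝ) (hcsym : ∀ a b, c a b = c b a)
    (n : Fin K → ℝ) (hn1 : ∑ a, n a = 1)
    (cbar : ℝ) (hdeg : ∀ a, ∑ b, c a b * n b = cbar)
    {ι : Type*} [LinearOrder ι] (N : ℝ)
    (i : ι) (𝒢 : Finset (Finset ι))
    (f : Finset ι) (hf : f ∈ 𝒢) (j : ι) (hj : j ∈ f.erase i) (b : Fin K) :
    deriv (fun x : ℝ =>
        Zfun N c n i 𝒢 (fun g j' b' => if g = f ∧ j' = j ∧ b' = b then x else n b')) (n b)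
      = (cbar / N)
          * (∏ g ∈ 𝒢.erase f, cbar * (g.card : ℝ) * ((g.card : ℝ) - 1) / (2 * N))
          * (1 + ((f.card : ℝ) - 2) * (2 + ((f.card : ℝ) - 3) / 2)) := by
  have hc : (of c).IsSymm := IsSymm.ext fun a b => hcsym b a
  have hcn : of c *ᵥ n = fun _ => cbar := funext hdeg
  set P := ∏ g ∈ 𝒢.erase f, cbar * (g.card : ℝ) * ((g.card : ℝ) - 1) / (2 * N)
  set M₀ := Mmsg N c i (fun _ _ => n) f
  set M₁ := Mmsg N c i (fun _ => Function.update (fun _ => n) j (Pi.single b 1)) f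
  have hMg (x : ℝ) (a : Fin K) {g : Finset ι} (hg : g ∈ 𝒢.erase f) :
      Mmsg N c i (fun g j' b' => if g = f ∧ j' = j ∧ b' = b then x else n b') g a
        = cbar * (g.card : ℝ) * ((g.card : ℝ) - 1) / (2 * N) := by
    rw [Mmsg_congr N c i (Q' := fun _ _ => n) (by simp [(mem_erase.1 hg).1]),
      Mmsg_const_eq N i hc hcn hn1]
  have hZ : (fun x : ℝ =>
        Zfun N c n i 𝒢 (fun g j' b' => if g = f ∧ j' = j ∧ b' = b then x else n b'))
      = fun x => ∑ a, n a * (M₀ a * P) + (x - n b) * ((∑ a, n a * M₁ a) * P) := by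
    funext x
    simp only [Zfun, ← mul_prod_erase 𝒢 _ hf, Mmsg_ite_eq_add_mul N c i hj,
      Finset.prod_congr rfl fun g hg => hMg x _ hg]
    rw [Finset.sum_mul, Finset.mul_sum, ← Finset.sum_add_distrib]
    exact Finset.sum_congr rfl fun a _ => by ring
  rw [hZ, ((((hasDerivAt_id _).sub_const _).mul_const _).const_add _).deriv,
    sum_mul_Mmsg_update_single N i hc hcn hn1 hj b]
  ring

/-- The partial derivative of `Z` with respect to the coordinate `q_{j→f}(b)`,
evaluated at the point where every message equals `n`, is
`(c/N)·(∏_{g∈𝒢, g≠f} c·|g|·(|g|−1)/(2N))·[1 + (|f|−2)·(2 + (|f|−3)/2)]`,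
under the constant expected group degree assumption. -/
theorem deriv_normalizing_constant_at_fixed_point {K : ℕ} (hK : 1 ≤ K)
    (c : Fin K → Fin K → ℝ) (hcsym : ∀ a b, c a b = c b a) (hcnn : ∀ a b, 0 ≤ c a b)
    (n : Fin K → ℝ) (hn : ∀ a, 0 ≤ n a) (hn1 : ∑ a, n a = 1)
    (cbar : ℝ) (hcbar : 0 < cbar) (hdeg : ∀ a, ∑ b, c a b * n b = cbar)
    {ι : Type*} [LinearOrder ι] (N : ℝ) (hN : 0 < N)
    (i : ι) (𝒢 : Finset (Finset ι)) (h𝒢 : ∀ g ∈ 𝒢, i ∈ g ∧ 2 ≤ g.card)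
    (f : Finset ι) (hf : f ∈ 𝒢) (j : ι) (hj : j ∈ f.erase i) (b : Fin K) :
    deriv (fun x : ℝ =>
        Zfun N c n i 𝒢 (fun g j' b' => if g = f ∧ j' = j ∧ b' = b then x else n b')) (n b)
      = (cbar / N)
          * (∏ g ∈ 𝒢.erase f, cbar * (g.card : ℝ) * ((g.card : ℝ) - 1) / (2 * N))
          * (1 + ((f.card : ℝ) - 2) * (2 + ((f.card : ℝ) - 3) / 2)) :=
  deriv_normalizing_constant_at_fixed_point_general c hcsym n hn1 cbar hdeg N i 𝒢 f hf j hj b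
end

section
/- With p_H, p_E and p_C as defined, it holds exactly that H(p_C) − KL( p_H ‖ p_C ⊗ p_E ) = −(1/E)·Σ_{e∈E} log( 2/(|e|·(|e|−1)) ) = log γ₁, where p_C ⊗ p_E is the product distribution ({i,j}, e) ↦ p_C({i,j})·p_E(e), H(p_C) = −Σ_{{i,j}} p_C({i,j}) log p_C({i,j}), and KL( p_H ‖ p_C ⊗ p_E ) = Σ_{(e,{i,j}): p_H({i,j},e)>0} p_H({i,j},e)·log( p_H({i,j},e)/(p_C({i,j})·p_E(e)) ). -/
/-!
The difference `H(p_C) − KL(p_H ‖ p_C ⊗ p_E)` is `H(C) − I(C; E) = H(C | E)`, with the second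
marginal only entering through `p_E(e) ≠ 0`. Conditionally on the hyperedge `e`, the pair is
uniform on the `(|e|).choose 2 = |e|(|e| − 1)/2` pairs inside `e`, so
`H(C | E) = (1/E) Σ_e log ((|e|).choose 2)`.
-/

open Finset

/-- The joint distribution `p_H({i,j}, e) = (1/E)·2/(|e|(|e|−1))` if `{i,j} ⊆ e`, `0`
otherwise, on (unordered pairs of distinct nodes) × hyperedges. -/
noncomputable def pJoint {V : Type*} [DecidableEq V] (E : Finset (Finset V))
    (i j : V) (e : Finset V) : ℝ :=
  if i ∈ e ∧ j ∈ e then (1 / (E.card : ℝ)) * (2 / ((e.card : ℝ) * ((e.card : ℝ) - 1))) else 0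

/-- The clique-decomposition marginal `p_C({i,j}) = (1/E)·Σ_{e∈E : {i,j}⊆e} 2/(|e|(|e|−1))`. -/
noncomputable def pClique {V : Type*} [DecidableEq V] (E : Finset (Finset V)) (i j : V) : ℝ :=
  (1 / (E.card : ℝ)) *
    ∑ e ∈ E.filter (fun e => i ∈ e ∧ j ∈ e), 2 / ((e.card : ℝ) * ((e.card : ℝ) - 1))

theorem card_filter_lt_offDiag {α : Type*} [LinearOrder α] (s : Finset α) :
    #{x ∈ s.offDiag | x.1 < x.2} = (#s).choose 2 := by
  have h := sum_sym2_filter_not_isDiag s fun _ => 1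
  simp only [sum_const, smul_eq_mul, mul_one] at h
  rw [← h, ← Sym2.card_image_offDiag, ← Sym2.filter_image_mk_not_isDiag, ← sym2_eq_image]

theorem two_div_mul_sub_one_eq_inv_choose (n : ℕ) :
    2 / ((n : ℝ) * ((n : ℝ) - 1)) = ((n.choose 2 : ℕ) : ℝ)⁻¹ := by
  rw [Nat.cast_choose_two, inv_div]

theorem entropy_sub_kl_eq_condEntropy {α β : Type*} (s : Finset α) (t : Finset β)
    (p : α → β → ℝ) (q : α → ℝ) (r : β → ℝ) (hp : ∀ a ∈ s, ∀ b ∈ t, 0 ≤ p a b)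
    (hq : ∀ a ∈ s, q a = ∑ b ∈ t, p a b) (hr : ∀ b ∈ t, r b ≠ 0) :
    -(∑ a ∈ s, q a * Real.log (q a))
        - ∑ b ∈ t, ∑ a ∈ s with 0 < p a b, p a b * Real.log (p a b / (q a * r b))
      = -∑ b ∈ t, ∑ a ∈ s, p a b * Real.log (p a b / r b) := by
  have hterm : ∀ a ∈ s, ∀ b ∈ t, p a b * Real.log (p a b / (q a * r b))
      = p a b * Real.log (p a b / r b) - p a b * Real.log (q a) := by
    intro a ha b hb
    rcases (hp a ha b hb).eq_or_lt with hzero | hpos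
    · simp [← hzero]
    have hqa : 0 < q a := hpos.trans_le <| (hq a ha).symm ▸
      single_le_sum (hp a ha) hb
    rw [mul_comm (q a), ← div_div, Real.log_div (div_ne_zero hpos.ne' (hr b hb)) hqa.ne',
      mul_sub]
  have hcross : ∑ b ∈ t, ∑ a ∈ s, p a b * Real.log (q a) = ∑ a ∈ s, q a * Real.log (q a) := by
    rw [sum_comm]
    exact sum_congr rfl fun a ha => by rw [← sum_mul, hq a ha]
  have hKL : ∑ b ∈ t, ∑ a ∈ s with 0 < p a b, p a b * Real.log (p a b / (q a * r b))
      = ∑ b ∈ t, ∑ a ∈ s, p a b * Real.log (p a b / (q a * r b)) :=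
    sum_congr rfl fun b hb => sum_filter_of_ne fun a ha h =>
      (hp a ha b hb).lt_of_ne' (left_ne_zero_of_mul h)
  rw [hKL, sum_congr rfl fun b hb => sum_congr rfl fun a ha => hterm a ha b hb]
  simp only [sum_sub_distrib, hcross]
  ring

theorem pClique_eq_sum_pJoint {V : Type*} [DecidableEq V] (E : Finset (Finset V)) (i j : V) :
    pClique E i j = ∑ e ∈ E, pJoint E i j e := by
  rw [pClique, mul_sum, sum_filter]
  rfl

theorem pJoint_nonneg {V : Type*} [DecidableEq V] (E : Finset (Finset V)) (i j : V)
    (e : Finset V) : 0 ≤ pJoint E i j e := by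
  rw [pJoint, two_div_mul_sub_one_eq_inv_choose]
  split_ifs <;> positivity

theorem filter_lt_and_mem_eq_offDiag {V : Type*} [Fintype V] [LinearOrder V] (e : Finset V) :
    {ij ∈ (univ : Finset (V × V)) | ij.1 < ij.2 ∧ ij.1 ∈ e ∧ ij.2 ∈ e}
      = {ij ∈ e.offDiag | ij.1 < ij.2} := by
  ext ij
  simp only [mem_filter, mem_univ, mem_offDiag]
  grind

theorem sum_pJoint_mul_log_div {V : Type*} [Fintype V] [LinearOrder V]
    (E : Finset (Finset V)) (hE : E.Nonempty) (e : Finset V) (he : 2 ≤ e.card) :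
    ∑ ij ∈ (univ : Finset V) ×ˢ univ with ij.1 < ij.2,
        pJoint E ij.1 ij.2 e * Real.log (pJoint E ij.1 ij.2 e / (1 / (E.card : ℝ)))
      = 1 / (E.card : ℝ) * Real.log (2 / ((e.card : ℝ) * ((e.card : ℝ) - 1))) := by
  set w := 2 / ((e.card : ℝ) * ((e.card : ℝ) - 1)) with hw
  have hN : 1 / (E.card : ℝ) ≠ 0 := by simp [hE.ne_empty]
  have hterm : ∀ ij : V × V,
      pJoint E ij.1 ij.2 e * Real.log (pJoint E ij.1 ij.2 e / (1 / (E.card : ℝ)))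
        = if ij.1 ∈ e ∧ ij.2 ∈ e then 1 / (E.card : ℝ) * w * Real.log w else 0 := by
    intro ij
    unfold pJoint
    split_ifs
    · rw [mul_div_cancel_left₀ _ hN]
    · simp
  have hcard : ((e.card.choose 2 : ℕ) : ℝ) * w = 1 := by
    rw [hw, two_div_mul_sub_one_eq_inv_choose]
    exact mul_inv_cancel₀ (by exact_mod_cast (Nat.choose_pos he).ne')
  rw [sum_congr rfl fun ij _ => hterm ij, sum_ite, sum_const_zero, add_zero, sum_const,
    filter_filter, univ_product_univ, filter_lt_and_mem_eq_offDiag, card_filter_lt_offDiag,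
    nsmul_eq_mul]
  linear_combination (1 / (E.card : ℝ) * Real.log w) * hcard

/-- Exactly,
`H(p_C) − KL(p_H ‖ p_C ⊗ p_E) = −(1/E)·Σ_{e∈E} log(2/(|e|(|e|−1))) = log γ₁`, where
`p_C ⊗ p_E` is the product distribution, `H(p_C) = −Σ_{{i,j}} p_C log p_C`, and the KL divergence
sums `p_H·log(p_H/(p_C·p_E))` over the pairs `(e, {i,j})` with `p_H({i,j},e) > 0`. -/
theorem clique_entropy_minus_KL {V : Type*} [Fintype V] [LinearOrder V]
    (E : Finset (Finset V)) (hE : E.Nonempty) (hcard : ∀ e ∈ E, 2 ≤ e.card) :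
    ((-(∑ ij ∈ ((univ : Finset V) ×ˢ univ).filter fun ij => ij.1 < ij.2,
          pClique E ij.1 ij.2 * Real.log (pClique E ij.1 ij.2)))
      - ∑ e ∈ E, ∑ ij ∈ ((univ : Finset V) ×ˢ univ).filter
            (fun ij => ij.1 < ij.2 ∧ 0 < pJoint E ij.1 ij.2 e),
          pJoint E ij.1 ij.2 e *
            Real.log (pJoint E ij.1 ij.2 e / (pClique E ij.1 ij.2 * (1 / (E.card : ℝ))))
      = -(1 / (E.card : ℝ)) * ∑ e ∈ E, Real.log (2 / ((e.card : ℝ) * ((e.card : ℝ) - 1))))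
    ∧
    -(1 / (E.card : ℝ)) * ∑ e ∈ E, Real.log (2 / ((e.card : ℝ) * ((e.card : ℝ) - 1)))
      = Real.log (Real.exp (-(1 / (E.card : ℝ)) *
          ∑ f ∈ E, Real.log (2 / ((f.card : ℝ) * ((f.card : ℝ) - 1))))) := by
  refine ⟨?_, (Real.log_exp _).symm⟩
  have hN : 1 / (E.card : ℝ) ≠ 0 := by simp [hE.ne_empty]
  have hcond := entropy_sub_kl_eq_condEntropy {ij ∈ (univ : Finset V) ×ˢ univ | ij.1 < ij.2} E
    (fun ij e => pJoint E ij.1 ij.2 e) (fun ij => pClique E ij.1 ij.2) (fun _ => 1 / (E.card : ℝ))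
    (fun _ _ _ _ => pJoint_nonneg ..) (fun _ _ => pClique_eq_sum_pJoint ..) (fun _ _ => hN)
  simp only [filter_filter] at hcond
  rw [hcond, sum_congr rfl fun e he => sum_pJoint_mul_log_div E hE e (hcard e he), ← mul_sum,
    neg_mul]
end

section
/- Let m ≥ 3, let p be a symmetric K×K real matrix, fix a ∈ {1,…,K}, and let q_2,…,q_m : {1,…,K} → ℝ satisfy Σ_{t=1}^K q_j(t) = 1 for each j. For 2 ≤ n ≤ m define E_n(a) = Σ_{(t_2,…,t_n)∈{1,…,K}^{n−1}} ( Σ_{1≤r<s≤n} p_{t_r t_s} ) · ∏_{j=2}^{n} q_j(t_j), where t_1 = a, and define s_n(b) = Σ_{k=2}^{n−1} Σ_{t=1}^K p_{t b}·q_k(t). Then for every 3 ≤ n ≤ m the recursion E_n(a) = E_{n−1}(a) + Σ_{t=1}^K q_n(t)·( p_{a t} + s_n(t) ) holds, so that E_m(a) (the unnormalized hyperedge-to-node message) can be computed in O(K·m) operations. -/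
/-!
Think of `E_n(a)` as the expectation of the pair energy `Σ_{r<s≤n} p_{t_r t_s}` when `t_1 = a`
and `t_2, …, t_n` are independent with laws `q_2, …, q_n`. Passing from `n - 1` to `n` adds the
pairs `(r, n)`, `r < n`; conditioning on `t_n = u`, the old energy keeps its expectation
`E_{n-1}(a)`, the pair `(1, n)` contributes `p_{a u}` and, by linearity, each pair `(k, n)` with
`2 ≤ k < n` contributes `Σ_v p_{v u} q_k(v)`. Averaging over `u` with weights `q_n(u)` gives the
recursion.
-/

open Finset

section Pinned

variable {α κ R : Type*} [DecidableEq α]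

def pinnedLabeling (S : Finset α) (a : κ) (t : S → κ) (x : α) : κ :=
  if h : x ∈ S then t ⟨x, h⟩ else a

theorem pinnedLabeling_of_mem {S : Finset α} {x : α} (hx : x ∈ S) (a : κ) (t : S → κ) :
    pinnedLabeling S a t x = t ⟨x, hx⟩ :=
  dif_pos hx

theorem pinnedLabeling_of_notMem {S : Finset α} {x : α} (hx : x ∉ S) (a : κ) (t : S → κ) :
    pinnedLabeling S a t x = a :=
  dif_neg hx

def insertLabelingEquiv {S : Finset α} {x : α} (hx : x ∉ S) (a : κ) :
    κ × (S → κ) ≃ (↥(insert x S) → κ) where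
  toFun ut y := Function.update (pinnedLabeling S a ut.2) x ut.1 y
  invFun t := (t ⟨x, mem_insert_self x S⟩, fun y => t ⟨y, mem_insert_of_mem y.2⟩)
  left_inv := fun ⟨u, t⟩ => by
    ext y
    · simp
    · simp [Function.update_of_ne (ne_of_mem_of_not_mem y.2 hx), pinnedLabeling_of_mem y.2]
  right_inv t := by
    funext ⟨y, hy⟩
    by_cases hyx : y = x
    · subst hyx
      simp
    · have hyS : y ∈ S := (mem_insert.mp hy).resolve_left hyx
      simp [Function.update_of_ne hyx, pinnedLabeling_of_mem hyS]

theorem pinnedLabeling_insertLabelingEquiv {S : Finset α} {x : α} (hx : x ∉ S) (a : κ)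
    (u : κ) (t : S → κ) :
    pinnedLabeling (insert x S) a (insertLabelingEquiv hx a (u, t))
      = Function.update (pinnedLabeling S a t) x u := by
  funext y
  by_cases hy : y ∈ insert x S
  · exact pinnedLabeling_of_mem hy a _
  · have hyx : y ≠ x := fun h => hy (h ▸ mem_insert_self x S)
    rw [pinnedLabeling_of_notMem hy, Function.update_of_ne hyx,
      pinnedLabeling_of_notMem fun h => hy (mem_insert_of_mem h)]

theorem prod_insertLabelingEquiv {M : Type*} [CommMonoid M] {S : Finset α} {x : α} (hx : x ∉ S)
    (a : κ) (q : α → κ → M) (u : κ) (t : S → κ) :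
    ∏ j : ↥(insert x S), q j (insertLabelingEquiv hx a (u, t) j)
      = q x u * ∏ j : S, q j (t j) := by
  change ∏ j : ↥(insert x S), q j (Function.update (pinnedLabeling S a t) x u j) = _
  rw [prod_coe_sort (insert x S) fun y => q y (Function.update (pinnedLabeling S a t) x u y),
    prod_insert hx, Function.update_self, ← prod_coe_sort S]
  congr 1
  refine prod_congr rfl fun y _ => ?_
  rw [Function.update_of_ne (ne_of_mem_of_not_mem y.2 hx), pinnedLabeling_of_mem y.2]

variable [Fintype κ] [CommSemiring R]

/-- With `S = {2,…,n}` and `f` the pair energy this is `E_n(a)`: the nodes outside `S` are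
pinned to `a`, and the labelings of the free nodes are weighted by the messages `q`. -/
def pinnedSum (S : Finset α) (a : κ) (q : α → κ → R) (f : (α → κ) → R) : R :=
  ∑ t : S → κ, f (pinnedLabeling S a t) * ∏ j : S, q j (t j)

theorem pinnedSum_congr {S : Finset α} {a : κ} {q : α → κ → R} {f g : (α → κ) → R}
    (h : ∀ t, f (pinnedLabeling S a t) = g (pinnedLabeling S a t)) :
    pinnedSum S a q f = pinnedSum S a q g := by
  simp only [pinnedSum, h]

theorem pinnedSum_add (S : Finset α) (a : κ) (q : α → κ → R) (f g : (α → κ) → R) :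
    pinnedSum S a q (fun ℓ => f ℓ + g ℓ) = pinnedSum S a q f + pinnedSum S a q g := by
  simp only [pinnedSum, add_mul, sum_add_distrib]

theorem pinnedSum_const {S : Finset α} (a : κ) {q : α → κ → R} (hq : ∀ i ∈ S, ∑ v, q i v = 1)
    (c : R) : pinnedSum S a q (fun _ => c) = c := by
  rw [pinnedSum, ← mul_sum, ← Fintype.prod_sum,
    Fintype.prod_eq_one _ fun i : S => hq i i.2, mul_one]

theorem pinnedSum_insert {S : Finset α} {x : α} (hx : x ∉ S) (a : κ) (q : α → κ → R)
    (f : (α → κ) → R) :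
    pinnedSum (insert x S) a q f
      = ∑ u, q x u * pinnedSum S a q (fun ℓ => f (Function.update ℓ x u)) := by
  rw [pinnedSum, ← (insertLabelingEquiv hx a).sum_comp, Fintype.sum_prod_type]
  simp only [pinnedLabeling_insertLabelingEquiv, prod_insertLabelingEquiv, pinnedSum, mul_sum]
  refine sum_congr rfl fun u _ => sum_congr rfl fun t _ => ?_
  ring

theorem pinnedSum_apply_of_notMem {S : Finset α} {x : α} (hx : x ∉ S) (a : κ) {q : α → κ → R}
    (hq : ∀ i ∈ S, ∑ v, q i v = 1) (g : κ → R) :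
    pinnedSum S a q (fun ℓ => g (ℓ x)) = g a := by
  rw [pinnedSum_congr (g := fun _ => g a) fun t => by rw [pinnedLabeling_of_notMem hx],
    pinnedSum_const a hq]

theorem pinnedSum_sum_apply {S : Finset α} (a : κ) {q : α → κ → R}
    (hq : ∀ i ∈ S, ∑ v, q i v = 1) (g : α → κ → R) :
    pinnedSum S a q (fun ℓ => ∑ i ∈ S, g i (ℓ i)) = ∑ i ∈ S, ∑ v, g i v * q i v := by
  induction S using Finset.induction_on with
  | empty => simp [pinnedSum]
  | insert x S hx ih =>
    have hqS : ∀ i ∈ S, ∑ v, q i v = 1 := fun i hi => hq i (mem_insert_of_mem hi)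
    have split : ∀ u (ℓ : α → κ), ∑ i ∈ insert x S, g i (Function.update ℓ x u i)
        = g x u + ∑ i ∈ S, g i (ℓ i) := by
      intro u ℓ
      rw [sum_insert hx, Function.update_self]
      congr 1
      exact sum_congr rfl fun i hi => by rw [Function.update_of_ne (ne_of_mem_of_not_mem hi hx)]
    simp only [pinnedSum_insert hx, split, pinnedSum_add, pinnedSum_const a hqS, ih hqS]
    rw [sum_insert hx]
    simp only [mul_add, sum_add_distrib, ← sum_mul, hq x (mem_insert_self x S), one_mul, mul_comm]

end Pinned

section PairEnergy

variable {κ R : Type*} [AddCommMonoid R]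

def pairEnergy (p : κ → κ → R) (n : ℕ) (ℓ : ℕ → κ) : R :=
  ∑ rs ∈ ((Icc 1 n) ×ˢ (Icc 1 n)).filter (fun rs => rs.1 < rs.2), p (ℓ rs.1) (ℓ rs.2)

theorem pairEnergy_eq_add {n : ℕ} (hn : 1 ≤ n) (p : κ → κ → R) (ℓ : ℕ → κ) :
    pairEnergy p n ℓ = pairEnergy p (n - 1) ℓ + ∑ r ∈ Icc 1 (n - 1), p (ℓ r) (ℓ n) := by
  have hpairs : ((Icc 1 n) ×ˢ (Icc 1 n)).filter (fun rs => rs.1 < rs.2)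
      = ((Icc 1 (n - 1)) ×ˢ (Icc 1 (n - 1))).filter (fun rs => rs.1 < rs.2)
        ∪ (Icc 1 (n - 1)) ×ˢ {n} := by
    ext ⟨r, s⟩
    simp only [mem_union, mem_filter, mem_product, mem_Icc, mem_singleton]
    omega
  have hdisj : Disjoint (((Icc 1 (n - 1)) ×ˢ (Icc 1 (n - 1))).filter (fun rs => rs.1 < rs.2))
      ((Icc 1 (n - 1)) ×ˢ {n}) := by
    rw [disjoint_left]
    rintro ⟨r, s⟩
    simp only [mem_filter, mem_product, mem_Icc, mem_singleton]
    omega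
  rw [pairEnergy, hpairs, sum_union hdisj, sum_product, pairEnergy]
  simp only [sum_singleton]

theorem pairEnergy_update_of_lt {n x : ℕ} (hx : n < x) (p : κ → κ → R) (ℓ : ℕ → κ) (u : κ) :
    pairEnergy p n (Function.update ℓ x u) = pairEnergy p n ℓ := by
  refine sum_congr rfl fun rs hrs => ?_
  simp only [mem_filter, mem_product, mem_Icc] at hrs
  rw [Function.update_of_ne (by omega), Function.update_of_ne (by omega)]

theorem pairEnergy_update_self {n : ℕ} (hn : 2 ≤ n) (p : κ → κ → R) (ℓ : ℕ → κ) (u : κ) :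
    pairEnergy p n (Function.update ℓ n u)
      = pairEnergy p (n - 1) ℓ + (p (ℓ 1) u + ∑ i ∈ Icc 2 (n - 1), p (ℓ i) u) := by
  rw [pairEnergy_eq_add (by omega), pairEnergy_update_of_lt (by omega), Function.update_self,
    ← insert_Icc_add_one_left_eq_Icc (by omega : 1 ≤ n - 1), sum_insert (by simp)]
  congr 2
  · rw [Function.update_of_ne (by omega : (1 : ℕ) ≠ n)]
  · refine sum_congr rfl fun i hi => ?_
    rw [Function.update_of_ne (by simp only [mem_Icc] at hi; omega)]

end PairEnergy

theorem message_dynamic_programming_recursion_general {K : ℕ} (m : ℕ)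
    (p : Fin K → Fin K → ℝ) (a : Fin K)
    (q : ℕ → Fin K → ℝ) (hq : ∀ j, 2 ≤ j → j ≤ m → ∑ u, q j u = 1) :
    ∀ n, 3 ≤ n → n ≤ m →
      (∑ t : {x // x ∈ Finset.Icc 2 n} → Fin K,
          (∑ rs ∈ ((Finset.Icc 1 n) ×ˢ (Finset.Icc 1 n)).filter fun rs => rs.1 < rs.2,
              p (if h : rs.1 ∈ Finset.Icc 2 n then t ⟨rs.1, h⟩ else a)
                (if h : rs.2 ∈ Finset.Icc 2 n then t ⟨rs.2, h⟩ else a))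
            * ∏ j : {x // x ∈ Finset.Icc 2 n}, q j.1 (t j))
      = (∑ t : {x // x ∈ Finset.Icc 2 (n - 1)} → Fin K,
          (∑ rs ∈ ((Finset.Icc 1 (n - 1)) ×ˢ (Finset.Icc 1 (n - 1))).filter
              fun rs => rs.1 < rs.2,
              p (if h : rs.1 ∈ Finset.Icc 2 (n - 1) then t ⟨rs.1, h⟩ else a)
                (if h : rs.2 ∈ Finset.Icc 2 (n - 1) then t ⟨rs.2, h⟩ else a))
            * ∏ j : {x // x ∈ Finset.Icc 2 (n - 1)}, q j.1 (t j))
        + ∑ u, q n u * (p a u + ∑ k ∈ Finset.Icc 2 (n - 1), ∑ v, p v u * q k v) := by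
  intro n hn hnm
  have hqS : ∀ j ∈ Icc 2 (n - 1), ∑ u, q j u = 1 := fun j hj => by
    simp only [mem_Icc] at hj
    exact hq j hj.1 (by omega)
  change pinnedSum (Icc 2 n) a q (pairEnergy p n)
    = pinnedSum (Icc 2 (n - 1)) a q (pairEnergy p (n - 1)) + _
  have hn_free : n ∉ Icc 2 (n - 1) := by simp only [mem_Icc]; omega
  have hone_pinned : 1 ∉ Icc 2 (n - 1) := by simp only [mem_Icc]; omega
  have conditioned : ∀ u,
      pinnedSum (Icc 2 (n - 1)) a q (fun ℓ => pairEnergy p n (Function.update ℓ n u))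
      = pinnedSum (Icc 2 (n - 1)) a q (pairEnergy p (n - 1))
        + (p a u + ∑ k ∈ Icc 2 (n - 1), ∑ v, p v u * q k v) := fun u => by
    simp only [pairEnergy_update_self (by omega : 2 ≤ n), pinnedSum_add,
      pinnedSum_apply_of_notMem hone_pinned a hqS fun v => p v u,
      pinnedSum_sum_apply a hqS fun _ v => p v u]
  rw [← insert_Icc_sub_one_right_eq_Icc (by omega : 2 ≤ n), pinnedSum_insert hn_free]
  simp only [conditioned, mul_add, sum_add_distrib, ← sum_mul, hq n (by omega) hnm, one_mul]

/-- Dynamic-programming recursion for the (unnormalized) hyperedge-to-node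
message on the hyperedge `{1,…,m}` with node `1` pinned to community `a`: with
`E_n(a) = Σ_{(t_2,…,t_n)} (Σ_{1≤r<s≤n} p_{t_r t_s}) ∏_{j=2}^n q_j(t_j)` (`t_1 = a`) and
`s_n(b) = Σ_{k=2}^{n−1} Σ_t p_{t b} q_k(t)`, for every `3 ≤ n ≤ m` one has
`E_n(a) = E_{n−1}(a) + Σ_t q_n(t)·(p_{a t} + s_n(t))`, so `E_m(a)` is computable in `O(K·m)`
operations. -/
theorem message_dynamic_programming_recursion {K : ℕ} (hK : 1 ≤ K) (m : ℕ) (hm : 3 ≤ m)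
    (p : Fin K → Fin K → ℝ) (hp : ∀ a b, p a b = p b a) (a : Fin K)
    (q : ℕ → Fin K → ℝ) (hq : ∀ j, 2 ≤ j → j ≤ m → ∑ u, q j u = 1) :
    ∀ n, 3 ≤ n → n ≤ m →
      (∑ t : {x // x ∈ Finset.Icc 2 n} → Fin K,
          (∑ rs ∈ ((Finset.Icc 1 n) ×ˢ (Finset.Icc 1 n)).filter fun rs => rs.1 < rs.2,
              p (if h : rs.1 ∈ Finset.Icc 2 n then t ⟨rs.1, h⟩ else a)
                (if h : rs.2 ∈ Finset.Icc 2 n then t ⟨rs.2, h⟩ else a))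
            * ∏ j : {x // x ∈ Finset.Icc 2 n}, q j.1 (t j))
      = (∑ t : {x // x ∈ Finset.Icc 2 (n - 1)} → Fin K,
          (∑ rs ∈ ((Finset.Icc 1 (n - 1)) ×ˢ (Finset.Icc 1 (n - 1))).filter
              fun rs => rs.1 < rs.2,
              p (if h : rs.1 ∈ Finset.Icc 2 (n - 1) then t ⟨rs.1, h⟩ else a)
                (if h : rs.2 ∈ Finset.Icc 2 (n - 1) then t ⟨rs.2, h⟩ else a))
            * ∏ j : {x // x ∈ Finset.Icc 2 (n - 1)}, q j.1 (t j))
        + ∑ u, q n u * (p a u + ∑ k ∈ Finset.Icc 2 (n - 1), ∑ v, p v u * q k v) :=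
  message_dynamic_programming_recursion_general m p a q hq
end
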